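/- arXiv:0810.1464 — 7 statements merged into one kernel-verified Lean document; each statement's English description precedes it below -/
import Mathlib

section
/- Let T, N, B : I → ℝ³ with curvature κ and torsion τ be a Frenet-framed unit speed timelike curve in Minkowski 3-space on an open interval I, and assume τ(s)² − κ(s)² > 0 for all s ∈ I. Then the curve is a slant helix (i.e. there is a constant vector U ≠ 0 with s ↦ ⟨N(s),U⟩ constant) if and only if there is a real constant c such that for all s ∈ I, (κ(s)²/(τ(s)² − κ(s)²)^{3/2}) · (τ/κ)'(s) = c. -/
open Real

noncomputable def mink (x y : Fin 3 → ℝ) : ℝ := x 0 * y 0 + x 1 * y 1 - x 2 * y 2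

lemma const_on {E : Type*} [NormedAddCommGroup E] [NormedSpace ℝ E] {I : Set ℝ}
    (hIconn : I.OrdConnected) {f : ℝ → E}
    (hf : ∀ s ∈ I, HasDerivAt f 0 s) {x y : ℝ} (hx : x ∈ I) (hy : y ∈ I) : f x = f y := by
  have h := (convex_iff_ordConnected.mpr hIconn).norm_image_sub_le_of_norm_hasDerivWithin_le
    (C := 0) (f' := fun _ => (0:E)) (fun s hs => (hf s hs).hasDerivWithinAt)
    (fun s hs => by simp) hx hy
  simp only [zero_mul, norm_le_zero_iff, sub_eq_zero] at h
  exact h.symm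

lemma hasDerivAt_mink {F : ℝ → Fin 3 → ℝ} {F' : Fin 3 → ℝ} {s : ℝ}
    (h : HasDerivAt F F' s) (U : Fin 3 → ℝ) :
    HasDerivAt (fun t => mink (F t) U) (mink F' U) s := by
  have h0 := hasDerivAt_pi.1 h 0
  have h1 := hasDerivAt_pi.1 h 1
  have h2 := hasDerivAt_pi.1 h 2
  exact ((h0.mul_const _).add (h1.mul_const _)).sub (h2.mul_const _)

lemma mink_smul_left (r : ℝ) (x y : Fin 3 → ℝ) : mink (r • x) y = r * mink x y := by
  unfold mink; simp [smul_eq_mul]; ring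

lemma mink_add_left (x x' y : Fin 3 → ℝ) : mink (x + x') y = mink x y + mink x' y := by
  unfold mink; simp; ring

lemma mink_symm (x y : Fin 3 → ℝ) : mink x y = mink y x := by unfold mink; ring

lemma mink_comb (x u v w : Fin 3 → ℝ) (p q r : ℝ) :
    mink x (p • u + q • v + r • w) = p * mink x u + q * mink x v + r * mink x w := by
  unfold mink; simp [Pi.add_apply, Pi.smul_apply, smul_eq_mul]; ring

lemma mink_zero_right (x : Fin 3 → ℝ) : mink x 0 = 0 := by unfold mink; simp

lemma mink_zero_left (y : Fin 3 → ℝ) : mink 0 y = 0 := by unfold mink; simp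

lemma mink_nondeg {T N B U : Fin 3 → ℝ}
    (hTT : mink T T = -1) (hNN : mink N N = 1) (hBB : mink B B = 1)
    (hTN : mink T N = 0) (hTB : mink T B = 0) (hNB : mink N B = 0)
    (hT : mink T U = 0) (hN : mink N U = 0) (hB : mink B U = 0) : U = 0 := by
  unfold mink at hTT hNN hBB hTN hTB hNB hT hN hB
  set M : Matrix (Fin 3) (Fin 3) ℝ := Matrix.of ![T, N, B] with hM
  set J : Matrix (Fin 3) (Fin 3) ℝ := Matrix.diagonal ![1, 1, -1] with hJ
  have hG : M * J * M.transpose = !![(-1:ℝ),0,0; 0,1,0; 0,0,1] := by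
    ext i j
    simp only [hM, hJ, Matrix.mul_apply, Matrix.transpose_apply, Fin.sum_univ_three,
      Matrix.of_apply, Matrix.diagonal_apply]
    fin_cases i <;> fin_cases j <;>
      simp [Matrix.vecHead, Matrix.vecTail] <;> linarith
  have hdet : M.det ^ 2 = 1 := by
    have h1 : (M * J * M.transpose).det = (-1 : ℝ) := by
      rw [hG, Matrix.det_fin_three]
      simp [Matrix.cons_val_two, Matrix.vecHead, Matrix.vecTail]
    rw [Matrix.det_mul, Matrix.det_mul, Matrix.det_transpose] at h1
    have hJd : J.det = -1 := by
      rw [hJ, Matrix.det_diagonal, Fin.prod_univ_three]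
      simp [Matrix.cons_val_two, Matrix.vecHead, Matrix.vecTail]
    nlinarith [h1]
  have hdet0 : M.det ≠ 0 := by intro h; rw [h] at hdet; norm_num at hdet
  have hmv : M.mulVec ![U 0, U 1, -U 2] = 0 := by
    ext i
    simp only [hM, Matrix.mulVec, dotProduct, Fin.sum_univ_three, Matrix.of_apply]
    fin_cases i <;> simp [Matrix.vecHead, Matrix.vecTail] <;> linarith
  have hU := Matrix.eq_zero_of_mulVec_eq_zero hdet0 hmv
  funext i
  fin_cases i
  · simpa using congrFun hU 0
  · simpa using congrFun hU 1
  · have := congrFun hU 2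
    simp at this
    simpa using this

lemma rpow_three_halves {x : ℝ} (hx : 0 < x) : x ^ ((3:ℝ)/2) = Real.sqrt x ^ 3 := by
  rw [Real.sqrt_eq_rpow, ← Real.rpow_natCast (x ^ ((1:ℝ)/2)) 3, ← Real.rpow_mul hx.le]
  norm_num

theorem stmt0
    (I : Set ℝ) (hIopen : IsOpen I) (hIconn : I.OrdConnected)
    (T N B : ℝ → Fin 3 → ℝ) (κ τ : ℝ → ℝ)
    (hTs : ContDiffOn ℝ (⊤ : ℕ∞) T I) (hNs : ContDiffOn ℝ (⊤ : ℕ∞) N I)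
    (hBs : ContDiffOn ℝ (⊤ : ℕ∞) B I)
    (hκs : ContDiffOn ℝ (⊤ : ℕ∞) κ I) (hκ0 : ∀ s ∈ I, κ s ≠ 0)
    (hτs : ContDiffOn ℝ (⊤ : ℕ∞) τ I) (hτ0 : ∀ s ∈ I, τ s ≠ 0)
    (hTT : ∀ s ∈ I, mink (T s) (T s) = -1)
    (hNN : ∀ s ∈ I, mink (N s) (N s) = 1)
    (hBB : ∀ s ∈ I, mink (B s) (B s) = 1)
    (hTN : ∀ s ∈ I, mink (T s) (N s) = 0)
    (hTB : ∀ s ∈ I, mink (T s) (B s) = 0)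
    (hNB : ∀ s ∈ I, mink (N s) (B s) = 0)
    (hT' : ∀ s ∈ I, HasDerivAt T (κ s • N s) s)
    (hN' : ∀ s ∈ I, HasDerivAt N (κ s • T s + τ s • B s) s)
    (hB' : ∀ s ∈ I, HasDerivAt B (-τ s • N s) s)
    (hpos : ∀ s ∈ I, τ s ^ 2 - κ s ^ 2 > 0) :
    (∃ U : Fin 3 → ℝ, U ≠ 0 ∧ ∃ d : ℝ, ∀ s ∈ I, mink (N s) U = d) ↔
      (∃ c : ℝ, ∀ s ∈ I, κ s ^ 2 / (τ s ^ 2 - κ s ^ 2) ^ ((3 : ℝ) / 2) * deriv (fun u => τ u / κ u) s = c) := by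
  rcases Set.eq_empty_or_nonempty I with hI | ⟨s₀, hs₀⟩
  · constructor
    · intro _
      exact ⟨0, fun s hs => absurd hs (by simp [hI])⟩
    · intro _
      refine ⟨fun _ => 1, ?_, 0, fun s hs => absurd hs (by simp [hI])⟩
      intro h
      simpa using congrFun h 0
  -- basic derivative facts
  have hκd : ∀ s ∈ I, HasDerivAt κ (deriv κ s) s := fun s hs =>
    (((hκs s hs).contDiffAt (hIopen.mem_nhds hs)).differentiableAt (by simp)).hasDerivAt
  have hτd : ∀ s ∈ I, HasDerivAt τ (deriv τ s) s := fun s hs =>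
    (((hτs s hs).contDiffAt (hIopen.mem_nhds hs)).differentiableAt (by simp)).hasDerivAt
  have hσpos : ∀ s ∈ I, 0 < Real.sqrt (τ s ^ 2 - κ s ^ 2) := fun s hs =>
    Real.sqrt_pos.2 (hpos s hs)
  have hσsq : ∀ s ∈ I, Real.sqrt (τ s ^ 2 - κ s ^ 2) ^ 2 = τ s ^ 2 - κ s ^ 2 := fun s hs =>
    Real.sq_sqrt (hpos s hs).le
  have hσd : ∀ s ∈ I, HasDerivAt (fun t => Real.sqrt (τ t ^ 2 - κ t ^ 2))
      ((τ s * deriv τ s - κ s * deriv κ s) / Real.sqrt (τ s ^ 2 - κ s ^ 2)) s := by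
    intro s hs
    have h := (((hτd s hs).pow 2).sub ((hκd s hs).pow 2)).sqrt (ne_of_gt (hpos s hs))
    refine h.congr_deriv ?_
    have h2 : Real.sqrt (τ s ^ 2 - κ s ^ 2) ≠ 0 := ne_of_gt (hσpos s hs)
    simp only [Pi.sub_apply, Pi.pow_apply]
    field_simp
    ring
  have hderivq : ∀ s ∈ I, deriv (fun u => τ u / κ u) s =
      (deriv τ s * κ s - τ s * deriv κ s) / κ s ^ 2 := fun s hs =>
    ((hτd s hs).div (hκd s hs) (hκ0 s hs)).deriv
  have hrpow : ∀ s ∈ I, (τ s ^ 2 - κ s ^ 2) ^ ((3:ℝ)/2) = Real.sqrt (τ s ^ 2 - κ s ^ 2) ^ 3 :=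
    fun s hs => rpow_three_halves (hpos s hs)
  constructor
  · rintro ⟨U, hU0, d, hNd⟩
    have ha' : ∀ s ∈ I, HasDerivAt (fun t => mink (T t) U) (κ s * d) s := by
      intro s hs
      have h := hasDerivAt_mink (hT' s hs) U
      rwa [mink_smul_left, hNd s hs] at h
    have hc' : ∀ s ∈ I, HasDerivAt (fun t => mink (B t) U) (-(τ s * d)) s := by
      intro s hs
      have h := hasDerivAt_mink (hB' s hs) U
      rwa [mink_smul_left, hNd s hs, neg_mul] at h
    have hrel : ∀ s ∈ I, κ s * mink (T s) U + τ s * mink (B s) U = 0 := by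
      intro s hs
      have hev : (fun t => mink (N t) U) =ᶠ[nhds s] fun _ => d :=
        Filter.eventuallyEq_of_mem (hIopen.mem_nhds hs) (fun t ht => hNd t ht)
      have h1 : HasDerivAt (fun t => mink (N t) U) 0 s :=
        (hasDerivAt_const s d).congr_of_eventuallyEq hev
      have h2 := hasDerivAt_mink (hN' s hs) U
      have h3 := h2.unique h1
      rw [mink_add_left, mink_smul_left, mink_smul_left] at h3
      linarith [h3]
    have hg' : ∀ s ∈ I, HasDerivAt (fun t => -(mink (B t) U) / κ t)
        ((τ s * d * κ s + mink (B s) U * deriv κ s) / κ s ^ 2) s := by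
      intro s hs
      have h := ((hc' s hs).neg).div (hκd s hs) (hκ0 s hs)
      refine h.congr_deriv ?_
      simp only [Pi.neg_apply]
      ring
    have haτg : ∀ t ∈ I, mink (T t) U = τ t * (-(mink (B t) U) / κ t) := by
      intro t ht
      have h := hrel t ht
      have hκne := hκ0 t ht
      field_simp
      linarith [h]
    have hii : ∀ s ∈ I, deriv τ s * (-(mink (B s) U) / κ s) +
        τ s * ((τ s * d * κ s + mink (B s) U * deriv κ s) / κ s ^ 2) = κ s * d := by
      intro s hs
      have hev : (fun t => τ t * (-(mink (B t) U) / κ t)) =ᶠ[nhds s] fun t => mink (T t) U :=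
        Filter.eventuallyEq_of_mem (hIopen.mem_nhds hs) (fun t ht => (haτg t ht).symm)
      have h1 : HasDerivAt (fun t => τ t * (-(mink (B t) U) / κ t)) (κ s * d) s :=
        (ha' s hs).congr_of_eventuallyEq hev
      have h2 := (hτd s hs).mul (hg' s hs)
      exact h2.unique h1
    have hiv : ∀ s ∈ I, deriv κ s * (-(mink (B s) U) / κ s) +
        κ s * ((τ s * d * κ s + mink (B s) U * deriv κ s) / κ s ^ 2) = τ s * d := by
      intro s hs
      have hev : (fun t => κ t * (-(mink (B t) U) / κ t)) =ᶠ[nhds s] fun t => -(mink (B t) U) :=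
        Filter.eventuallyEq_of_mem (hIopen.mem_nhds hs) (fun t ht => by
          have hκne := hκ0 t ht
          field_simp)
      have h0 := (hc' s hs).neg
      rw [neg_neg] at h0
      have h1 : HasDerivAt (fun t => κ t * (-(mink (B t) U) / κ t)) (τ s * d) s :=
        h0.congr_of_eventuallyEq hev
      have h2 := (hκd s hs).mul (hg' s hs)
      exact h2.unique h1
    have hq0 : ∀ s ∈ I, HasDerivAt
        (fun t => Real.sqrt (τ t ^ 2 - κ t ^ 2) * (-(mink (B t) U) / κ t)) 0 s := by
      intro s hs
      have h := (hσd s hs).mul (hg' s hs)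
      have hz : (τ s * deriv τ s - κ s * deriv κ s) / Real.sqrt (τ s ^ 2 - κ s ^ 2) *
            (-(mink (B s) U) / κ s) +
          Real.sqrt (τ s ^ 2 - κ s ^ 2) *
            ((τ s * d * κ s + mink (B s) U * deriv κ s) / κ s ^ 2) = 0 := by
        have h2 := hii s hs
        have h4 := hiv s hs
        have hσ2 := hσsq s hs
        have hσne := ne_of_gt (hσpos s hs)
        have hκne := hκ0 s hs
        field_simp at h2 h4 ⊢
        linear_combination τ s * h2 + (mink (B s) U * deriv κ s + κ s * τ s * d) * hσ2
      rw [hz] at h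
      exact h
    have hqE : ∀ s ∈ I, Real.sqrt (τ s ^ 2 - κ s ^ 2) * (-(mink (B s) U) / κ s) =
        Real.sqrt (τ s₀ ^ 2 - κ s₀ ^ 2) * (-(mink (B s₀) U) / κ s₀) :=
      fun s hs => const_on hIconn hq0 hs hs₀
    have key1 : ∀ s ∈ I, (κ s * deriv τ s - τ s * deriv κ s) * (-(mink (B s) U) / κ s) =
        (κ s ^ 2 - τ s ^ 2) * d := by
      intro s hs
      linear_combination κ s * hii s hs - τ s * hiv s hs
    set E : ℝ := Real.sqrt (τ s₀ ^ 2 - κ s₀ ^ 2) * (-(mink (B s₀) U) / κ s₀) with hEdef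
    by_cases hE : E = 0
    · exfalso
      have hg0 : ∀ s ∈ I, mink (B s) U = 0 := by
        intro s hs
        have h := hqE s hs
        rw [hE] at h
        have hσne := ne_of_gt (hσpos s hs)
        have hκne := hκ0 s hs
        field_simp at h
        exact (mul_eq_zero.1 (neg_eq_zero.1 (h.trans (mul_zero _)))).resolve_left hσne
      have ha0 : ∀ s ∈ I, mink (T s) U = 0 := by
        intro s hs
        have h := hrel s hs
        rw [hg0 s hs] at h
        simp at h
        exact h.resolve_left (hκ0 s hs)
      have hd0 : d = 0 := by
        have hev : (fun t => mink (T t) U) =ᶠ[nhds s₀] fun _ => (0:ℝ) :=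
          Filter.eventuallyEq_of_mem (hIopen.mem_nhds hs₀) (fun t ht => ha0 t ht)
        have h1 : HasDerivAt (fun t => mink (T t) U) 0 s₀ :=
          (hasDerivAt_const s₀ (0:ℝ)).congr_of_eventuallyEq hev
        have h2 := (ha' s₀ hs₀).unique h1
        exact (mul_eq_zero.1 h2).resolve_left (hκ0 s₀ hs₀)
      exact hU0 (mink_nondeg (hTT s₀ hs₀) (hNN s₀ hs₀) (hBB s₀ hs₀) (hTN s₀ hs₀)
        (hTB s₀ hs₀) (hNB s₀ hs₀) (ha0 s₀ hs₀) (by rw [hNd s₀ hs₀, hd0]) (hg0 s₀ hs₀))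
    · refine ⟨-d / E, ?_⟩
      intro s hs
      have k1 := key1 s hs
      have hqe := hqE s hs
      rw [hrpow s hs]
      rw [hderivq s hs]
      have hσne := ne_of_gt (hσpos s hs)
      have hκne := hκ0 s hs
      have hσ2 := hσsq s hs
      have key2 : (κ s * deriv τ s - τ s * deriv κ s) * E =
          -(d * Real.sqrt (τ s ^ 2 - κ s ^ 2) ^ 3) := by
        linear_combination -((κ s * deriv τ s - τ s * deriv κ s) * hqe) +
          Real.sqrt (τ s ^ 2 - κ s ^ 2) * k1 +
          d * Real.sqrt (τ s ^ 2 - κ s ^ 2) * hσ2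
      rw [div_mul_div_comm, div_eq_div_iff (mul_ne_zero (pow_ne_zero 3 hσne) (pow_ne_zero 2 hκne)) hE]
      linear_combination κ s ^ 2 * key2
  · rintro ⟨c₀, hc₀⟩
    have hkey : ∀ s ∈ I, deriv τ s * κ s - τ s * deriv κ s =
        c₀ * Real.sqrt (τ s ^ 2 - κ s ^ 2) ^ 3 := by
      intro s hs
      have h := hc₀ s hs
      rw [hrpow s hs, hderivq s hs] at h
      have hσne := ne_of_gt (hσpos s hs)
      have hκne := hκ0 s hs
      field_simp at h
      have h2 : κ s ^ 2 * (deriv τ s * κ s - τ s * deriv κ s -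
          c₀ * Real.sqrt (τ s ^ 2 - κ s ^ 2) ^ 3) = 0 := by linear_combination κ s ^ 2 * h
      have h3 := (mul_eq_zero.1 h2).resolve_left (pow_ne_zero 2 hκne)
      linarith [h3]
    have hτσ' : ∀ s ∈ I, HasDerivAt (fun t => τ t / Real.sqrt (τ t ^ 2 - κ t ^ 2))
        (-(c₀ * κ s)) s := by
      intro s hs
      have h := (hτd s hs).div (hσd s hs) (ne_of_gt (hσpos s hs))
      refine h.congr_deriv ?_
      have hσne := ne_of_gt (hσpos s hs)
      have hσ2 := hσsq s hs
      have hk := hkey s hs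
      have hκne := hκ0 s hs
      field_simp
      linear_combination deriv τ s * hσ2 - κ s * hk
    have hκσ' : ∀ s ∈ I, HasDerivAt (fun t => κ t / Real.sqrt (τ t ^ 2 - κ t ^ 2))
        (-(c₀ * τ s)) s := by
      intro s hs
      have h := (hκd s hs).div (hσd s hs) (ne_of_gt (hσpos s hs))
      refine h.congr_deriv ?_
      have hσne := ne_of_gt (hσpos s hs)
      have hσ2 := hσsq s hs
      have hk := hkey s hs
      have hκne := hκ0 s hs
      field_simp
      linear_combination deriv κ s * hσ2 - τ s * hk
    have hV0 : ∀ s ∈ I, HasDerivAt (fun t =>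
        (τ t / Real.sqrt (τ t ^ 2 - κ t ^ 2)) • T t + c₀ • N t +
        (κ t / Real.sqrt (τ t ^ 2 - κ t ^ 2)) • B t) 0 s := by
      intro s hs
      have h1 := (hτσ' s hs).smul (hT' s hs)
      have h2 := (hN' s hs).const_smul c₀
      have h3 := (hκσ' s hs).smul (hB' s hs)
      have h := (h1.add h2).add h3
      refine h.congr_deriv ?_
      funext i
      simp only [Pi.add_apply, Pi.smul_apply, Pi.zero_apply, Pi.neg_apply, smul_eq_mul,
        neg_smul]
      ring
    refine ⟨(τ s₀ / Real.sqrt (τ s₀ ^ 2 - κ s₀ ^ 2)) • T s₀ + c₀ • N s₀ +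
        (κ s₀ / Real.sqrt (τ s₀ ^ 2 - κ s₀ ^ 2)) • B s₀, ?_, c₀, ?_⟩
    · intro h
      have hBU : mink (B s₀) ((τ s₀ / Real.sqrt (τ s₀ ^ 2 - κ s₀ ^ 2)) • T s₀ + c₀ • N s₀ +
          (κ s₀ / Real.sqrt (τ s₀ ^ 2 - κ s₀ ^ 2)) • B s₀) = κ s₀ / Real.sqrt (τ s₀ ^ 2 - κ s₀ ^ 2) := by
        rw [mink_comb, mink_symm (B s₀) (T s₀), hTB s₀ hs₀, mink_symm (B s₀) (N s₀),
          hNB s₀ hs₀, hBB s₀ hs₀]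
        ring
      rw [h] at hBU
      rw [mink_zero_right] at hBU
      have : κ s₀ / Real.sqrt (τ s₀ ^ 2 - κ s₀ ^ 2) ≠ 0 :=
        div_ne_zero (hκ0 s₀ hs₀) (ne_of_gt (hσpos s₀ hs₀))
      exact this hBU.symm
    · intro s hs
      have hVc := const_on hIconn hV0 hs hs₀
      rw [← hVc, mink_comb, hNN s hs, mink_symm (N s) (T s), hTN s hs,
        hNB s hs]
      ring
end

section
/- Let T, N, B : I → ℝ³ with curvature κ and torsion τ be a Frenet-framed unit speed spacelike curve with spacelike normal in Minkowski 3-space on an open interval I, and assume κ(s)² − τ(s)² > 0 for all s ∈ I. Then the curve is a slant helix (i.e. there is a constant vector U ≠ 0 with s ↦ ⟨N(s),U⟩ constant) if and only if there is a real constant c such that for all s ∈ I, (κ(s)²/(κ(s)² − τ(s)²)^{3/2}) · (τ/κ)'(s) = c. -/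
open Real

lemma mink_frame_nondeg (t n b u : Fin 3 → ℝ)
    (htt : mink t t = 1) (hnn : mink n n = 1) (hbb : mink b b = -1)
    (htn : mink t n = 0) (htb : mink t b = 0) (hnb : mink n b = 0)
    (hut : mink t u = 0) (hun : mink n u = 0) (hub : mink b u = 0) : u = 0 := by
  classical
  simp only [mink] at htt hnn hbb htn htb hnb hut hun hub
  set η : Matrix (Fin 3) (Fin 3) ℝ := !![1,0,0;0,1,0;0,0,-1] with hη
  set M : Matrix (Fin 3) (Fin 3) ℝ := Matrix.of ![t, n, b] with hM
  have hGram : M * η * M.transpose = η := by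
    ext i j
    fin_cases i <;> fin_cases j <;>
      simp [hM, hη, Matrix.mul_apply, Fin.sum_univ_three, Matrix.transpose_apply, Matrix.vecHead, Matrix.vecTail, Function.comp] <;>
      first
        | linear_combination htt | linear_combination hnn | linear_combination hbb
        | linear_combination htn | linear_combination htb | linear_combination hnb
  have hdetη : η.det = -1 := by
    simp [hη, Matrix.det_fin_three]
  have hdet : M.det * -1 * M.det = -1 := by
    have := congrArg Matrix.det hGram
    rwa [Matrix.det_mul, Matrix.det_mul, Matrix.det_transpose, hdetη] at this
  have hMdet : (M * η).det ≠ 0 := by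
    rw [Matrix.det_mul, hdetη]
    intro h
    have : M.det = 0 := by nlinarith
    rw [this] at hdet; norm_num at hdet
  have hmv : (M * η).mulVec u = 0 := by
    ext i
    fin_cases i <;>
      simp [Matrix.mulVec, dotProduct, Matrix.mul_apply, Fin.sum_univ_three, hM, hη] <;>
      first | linear_combination hut | linear_combination hun | linear_combination hub
  exact Matrix.eq_zero_of_mulVec_eq_zero hMdet hmv

lemma const_of_deriv_zero {E : Type*} [NormedAddCommGroup E] [NormedSpace ℝ E]
    {I : Set ℝ} (hIopen : IsOpen I) (hIconn : I.OrdConnected) {f : ℝ → E}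
    (hf : ∀ s ∈ I, HasDerivAt f 0 s) {x y : ℝ} (hx : x ∈ I) (hy : y ∈ I) : f x = f y := by
  have hconv : Convex ℝ I := hIconn.convex
  refine hconv.is_const_of_fderivWithin_eq_zero
    (fun s hs => (hf s hs).differentiableAt.differentiableWithinAt) (fun s hs => ?_) hx hy
  rw [fderivWithin_of_isOpen hIopen hs]
  rw [(hf s hs).hasFDerivAt.fderiv]
  exact ContinuousLinearMap.ext fun v => by simp

lemma hasDerivAt_mink_const {X : ℝ → Fin 3 → ℝ} {X' : Fin 3 → ℝ} {s : ℝ}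
    (h : HasDerivAt X X' s) (Y : Fin 3 → ℝ) :
    HasDerivAt (fun u => mink (X u) Y) (mink X' Y) s := by
  have h0 := hasDerivAt_pi.1 h 0
  have h1 := hasDerivAt_pi.1 h 1
  have h2 := hasDerivAt_pi.1 h 2
  exact ((h0.mul_const (Y 0)).add (h1.mul_const (Y 1))).sub (h2.mul_const (Y 2))

theorem stmt3
    (I : Set ℝ) (hIopen : IsOpen I) (hIconn : I.OrdConnected)
    (T N B : ℝ → Fin 3 → ℝ) (κ τ : ℝ → ℝ)
    (hTs : ContDiffOn ℝ (⊤ : ℕ∞) T I) (hNs : ContDiffOn ℝ (⊤ : ℕ∞) N I)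
    (hBs : ContDiffOn ℝ (⊤ : ℕ∞) B I)
    (hκs : ContDiffOn ℝ (⊤ : ℕ∞) κ I) (hκ0 : ∀ s ∈ I, κ s ≠ 0)
    (hτs : ContDiffOn ℝ (⊤ : ℕ∞) τ I) (hτ0 : ∀ s ∈ I, τ s ≠ 0)
    (hTT : ∀ s ∈ I, mink (T s) (T s) = 1)
    (hNN : ∀ s ∈ I, mink (N s) (N s) = 1)
    (hBB : ∀ s ∈ I, mink (B s) (B s) = -1)
    (hTN : ∀ s ∈ I, mink (T s) (N s) = 0)
    (hTB : ∀ s ∈ I, mink (T s) (B s) = 0)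
    (hNB : ∀ s ∈ I, mink (N s) (B s) = 0)
    (hT' : ∀ s ∈ I, HasDerivAt T (κ s • N s) s)
    (hN' : ∀ s ∈ I, HasDerivAt N (-κ s • T s + τ s • B s) s)
    (hB' : ∀ s ∈ I, HasDerivAt B (τ s • N s) s)
    (hpos : ∀ s ∈ I, κ s ^ 2 - τ s ^ 2 > 0) :
    (∃ U : Fin 3 → ℝ, U ≠ 0 ∧ ∃ d : ℝ, ∀ s ∈ I, mink (N s) U = d) ↔
      (∃ c : ℝ, ∀ s ∈ I, κ s ^ 2 / (κ s ^ 2 - τ s ^ 2) ^ ((3 : ℝ) / 2) * deriv (fun u => τ u / κ u) s = c) := by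
  have hκ' : ∀ s ∈ I, HasDerivAt κ (deriv κ s) s := fun s hs =>
    ((hκs.differentiableOn (by norm_num)).differentiableAt (hIopen.mem_nhds hs)).hasDerivAt
  have hτ' : ∀ s ∈ I, HasDerivAt τ (deriv τ s) s := fun s hs =>
    ((hτs.differentiableOn (by norm_num)).differentiableAt (hIopen.mem_nhds hs)).hasDerivAt
  have hρpos : ∀ s ∈ I, 0 < Real.sqrt (κ s ^ 2 - τ s ^ 2) := fun s hs => Real.sqrt_pos.2 (hpos s hs)
  have hρsq : ∀ s ∈ I, Real.sqrt (κ s ^ 2 - τ s ^ 2) ^ 2 = κ s ^ 2 - τ s ^ 2 :=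
    fun s hs => Real.sq_sqrt (hpos s hs).le
  have hrpow : ∀ s ∈ I, (κ s ^ 2 - τ s ^ 2) ^ ((3:ℝ)/2) = Real.sqrt (κ s ^ 2 - τ s ^ 2) ^ 3 :=
    fun s hs => rpow_three_halves (hpos s hs)
  have hdq : ∀ s ∈ I, deriv (fun u => τ u / κ u) s
      = (deriv τ s * κ s - τ s * deriv κ s) / κ s ^ 2 :=
    fun s hs => ((hτ' s hs).div (hκ' s hs) (hκ0 s hs)).deriv
  constructor
  · rintro ⟨U, hU0, d, hU⟩
    rcases Set.eq_empty_or_nonempty I with hI | ⟨s₀, hs₀⟩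
    · exact ⟨0, fun s hs => absurd hs (by simp [hI])⟩
    set a : ℝ → ℝ := fun s => mink (T s) U with ha
    set g : ℝ → ℝ := fun s => mink (B s) U with hg
    have ha' : ∀ s ∈ I, HasDerivAt a (κ s * d) s := by
      intro s hs
      have h1 := hasDerivAt_mink_const (hT' s hs) U
      have h2 : mink (κ s • N s) U = κ s * d := by
        rw [← hU s hs]; simp [mink]; ring
      rwa [h2] at h1
    have hg' : ∀ s ∈ I, HasDerivAt g (τ s * d) s := by
      intro s hs
      have h1 := hasDerivAt_mink_const (hB' s hs) U
      have h2 : mink (τ s • N s) U = τ s * d := by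
        rw [← hU s hs]; simp [mink]; ring
      rwa [h2] at h1
    have hrel : ∀ s ∈ I, κ s * a s = τ s * g s := by
      intro s hs
      have h1 := hasDerivAt_mink_const (hN' s hs) U
      have h2 : HasDerivAt (fun u => mink (N u) U) 0 s := by
        refine (hasDerivAt_const s d).congr_of_eventuallyEq ?_
        filter_upwards [hIopen.mem_nhds hs] with u hu
        exact hU u hu
      have h3 := h2.unique h1
      simp only [mink, Pi.add_apply, Pi.smul_apply, Pi.neg_apply, smul_eq_mul, ha, hg] at h3 ⊢
      linear_combination h3
    have hF : ∀ s ∈ I, g s ^ 2 - a s ^ 2 = g s₀ ^ 2 - a s₀ ^ 2 := by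
      intro s hs
      refine const_of_deriv_zero hIopen hIconn (f := fun v => g v ^ 2 - a v ^ 2) ?_ hs hs₀
      intro u hu
      have h1 := ((hg' u hu).pow 2).sub ((ha' u hu).pow 2)
      refine h1.congr_deriv (Eq.symm ?_)
      push_cast
      linear_combination (2*d) * hrel u hu
    set φ : ℝ → ℝ := fun s => g s * Real.sqrt (κ s ^ 2 - τ s ^ 2) / κ s with hφ
    have hφ2 : ∀ s ∈ I, φ s ^ 2 = g s ^ 2 - a s ^ 2 := by
      intro s hs
      have h1 := hρsq s hs
      have h2 := hrel s hs
      have hκs0 := hκ0 s hs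
      simp only [hφ]
      field_simp
      linear_combination (g s ^ 2) * h1 + (κ s * a s + τ s * g s) * h2
    by_cases hm : g s₀ ^ 2 - a s₀ ^ 2 = 0
    · exfalso
      have haz : ∀ s ∈ I, a s = 0 := by
        intro s hs
        have h1 := (hF s hs).trans hm
        have h2 := hrel s hs
        have h3 := hpos s hs
        have h4 : a s ^ 2 * (κ s ^ 2 - τ s ^ 2) = 0 := by
          linear_combination (κ s * a s + τ s * g s) * h2 + (τ s ^ 2) * h1
        have h5 : a s ^ 2 = 0 := by
          rcases mul_eq_zero.1 h4 with h | h
          · exact h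
          · exact absurd h h3.ne'
        exact (pow_eq_zero_iff (by norm_num : (2:ℕ) ≠ 0)).1 h5
      have hgz : ∀ s ∈ I, g s = 0 := by
        intro s hs
        have h1 := (hF s hs).trans hm
        have h5 : g s ^ 2 = 0 := by
          have := haz s hs
          nlinarith [h1]
        exact (pow_eq_zero_iff (by norm_num : (2:ℕ) ≠ 0)).1 h5
      have hd0 : d = 0 := by
        have h1 := ha' s₀ hs₀
        have h2 : HasDerivAt a 0 s₀ := by
          refine (hasDerivAt_const s₀ 0).congr_of_eventuallyEq ?_
          filter_upwards [hIopen.mem_nhds hs₀] with u hu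
          exact haz u hu
        have h3 := h2.unique h1
        exact ((mul_eq_zero.1 h3.symm).resolve_left (hκ0 s₀ hs₀))
      have hat : mink (T s₀) U = 0 := haz s₀ hs₀
      have hbt : mink (B s₀) U = 0 := hgz s₀ hs₀
      have hnt : mink (N s₀) U = 0 := by rw [hU s₀ hs₀, hd0]
      exact hU0 (mink_frame_nondeg (T s₀) (N s₀) (B s₀) U (hTT s₀ hs₀) (hNN s₀ hs₀)
        (hBB s₀ hs₀) (hTN s₀ hs₀) (hTB s₀ hs₀) (hNB s₀ hs₀) hat hnt hbt)
    · have hφm : ∀ s ∈ I, φ s ^ 2 = g s₀ ^ 2 - a s₀ ^ 2 := fun s hs =>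
        (hφ2 s hs).trans (hF s hs)
      have hφ0 : ∀ s ∈ I, φ s ≠ 0 := by
        intro s hs h0
        apply hm
        rw [← hφm s hs, h0]
        norm_num
      have hgc : ContinuousOn g I := by
        have hBc : ContinuousOn B I := hBs.continuousOn
        have hcomp : ∀ i, ContinuousOn (fun s => B s i) I := fun i =>
          (continuous_apply i).comp_continuousOn hBc
        simp only [hg, mink]
        exact (((hcomp 0).mul continuousOn_const).add ((hcomp 1).mul continuousOn_const)).sub
          ((hcomp 2).mul continuousOn_const)
      have hφcont : ContinuousOn φ I := by
        simp only [hφ]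
        exact (hgc.mul (Real.continuous_sqrt.comp_continuousOn
          ((hκs.continuousOn.pow 2).sub (hτs.continuousOn.pow 2)))).div hκs.continuousOn hκ0
      have hφconst : ∀ s ∈ I, φ s = φ s₀ := by
        intro s hs
        by_contra hne
        have hsq : φ s ^ 2 = φ s₀ ^ 2 := (hφm s hs).trans (hφm s₀ hs₀).symm
        have hopp : φ s = -φ s₀ := by
          have h1 : (φ s - φ s₀) * (φ s + φ s₀) = 0 := by linear_combination hsq
          rcases mul_eq_zero.1 h1 with h | h
          · exact absurd (by linarith : φ s = φ s₀) hne
          · linarith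
        have hsub : Set.uIcc s₀ s ⊆ I := hIconn.uIcc_subset hs₀ hs
        have h0mem : (0:ℝ) ∈ Set.uIcc (φ s₀) (φ s) := by
          rw [hopp]
          rcases le_total 0 (φ s₀) with h | h
          · exact Set.mem_uIcc.2 (Or.inr ⟨by linarith, h⟩)
          · exact Set.mem_uIcc.2 (Or.inl ⟨h, by linarith⟩)
        obtain ⟨x, hx, hφx⟩ := intermediate_value_uIcc (hφcont.mono hsub) h0mem
        exact hφ0 x (hsub hx) hφx
      refine ⟨d / φ s₀, fun s hs => ?_⟩
      have hstar : deriv κ s * a s + κ s ^ 2 * d = deriv τ s * g s + τ s ^ 2 * d := by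
        have h1 : HasDerivAt (fun u => κ u * a u - τ u * g u) 0 s := by
          refine (hasDerivAt_const s 0).congr_of_eventuallyEq ?_
          filter_upwards [hIopen.mem_nhds hs] with u hu
          linear_combination hrel u hu
        have h2 := ((hκ' s hs).mul (ha' s hs)).sub ((hτ' s hs).mul (hg' s hs))
        have h3 := h1.unique h2
        linear_combination -h3
      have h1 := hρsq s hs
      have hκs0 := hκ0 s hs
      have hρ0 := (hρpos s hs).ne'
      have hp0 : φ s₀ ≠ 0 := hφ0 s₀ hs₀
      have hg0 : g s ≠ 0 := by
        intro h
        apply hφ0 s hs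
        simp [hφ, h]
      have hkey : (deriv τ s * κ s - τ s * deriv κ s) * g s
          = d * κ s * Real.sqrt (κ s ^ 2 - τ s ^ 2) ^ 2 := by
        linear_combination (-(κ s)) * hstar + (deriv κ s) * hrel s hs + (-(d * κ s)) * h1
      rw [hdq s hs, hrpow s hs, ← hφconst s hs]
      simp only [hφ]
      field_simp
      linear_combination hkey
  · rintro ⟨c, hc⟩
    rcases Set.eq_empty_or_nonempty I with hI | ⟨s₀, hs₀⟩
    · refine ⟨fun _ => 1, ?_, 0, fun s hs => absurd hs (by simp [hI])⟩
      intro h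
      simpa using congrFun h 0
    set ρ : ℝ → ℝ := fun s => Real.sqrt (κ s ^ 2 - τ s ^ 2) with hρ
    have hρ0 : ∀ s ∈ I, ρ s ≠ 0 := fun s hs => (hρpos s hs).ne'
    have hρ' : ∀ s ∈ I, HasDerivAt ρ
        ((2 * κ s * deriv κ s - 2 * τ s * deriv τ s) / (2 * ρ s)) s := by
      intro s hs
      have h1 : HasDerivAt (fun u => κ u ^ 2 - τ u ^ 2)
          (2 * κ s * deriv κ s - 2 * τ s * deriv τ s) s := by
        have h2 := ((hκ' s hs).pow 2).sub ((hτ' s hs).pow 2)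
        refine h2.congr_deriv (Eq.symm ?_)
        push_cast
        ring
      exact h1.sqrt (hpos s hs).ne'
    have hcs : ∀ s ∈ I, deriv τ s * κ s - τ s * deriv κ s = c * ρ s ^ 3 := by
      intro s hs
      have h := hc s hs
      rw [hdq s hs, hrpow s hs] at h
      have hκs0 := hκ0 s hs
      have hρs0 := hρ0 s hs
      rw [← h]
      simp only [hρ] at hρs0 ⊢
      field_simp
    set A : ℝ → ℝ := fun s => τ s / ρ s with hA
    set G : ℝ → ℝ := fun s => κ s / ρ s with hG
    have hA' : ∀ s ∈ I, HasDerivAt A (κ s * c) s := by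
      intro s hs
      have h1 := (hτ' s hs).div (hρ' s hs) (hρ0 s hs)
      have h2 : ρ s ^ 2 = κ s ^ 2 - τ s ^ 2 := hρsq s hs
      have hval : (deriv τ s * ρ s - τ s * ((2 * κ s * deriv κ s - 2 * τ s * deriv τ s) / (2 * ρ s))) / ρ s ^ 2
          = κ s * c := by
        have h3 := hcs s hs
        have hρs := hρ0 s hs
        have hκs0 := hκ0 s hs
        field_simp
        linear_combination deriv τ s * h2 + κ s * h3
      rw [hval] at h1
      exact h1
    have hG' : ∀ s ∈ I, HasDerivAt G (τ s * c) s := by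
      intro s hs
      have h1 := (hκ' s hs).div (hρ' s hs) (hρ0 s hs)
      have h2 : ρ s ^ 2 = κ s ^ 2 - τ s ^ 2 := hρsq s hs
      have hval : (deriv κ s * ρ s - κ s * ((2 * κ s * deriv κ s - 2 * τ s * deriv τ s) / (2 * ρ s))) / ρ s ^ 2
          = τ s * c := by
        have h3 := hcs s hs
        have hρs := hρ0 s hs
        have hκs0 := hκ0 s hs
        field_simp
        linear_combination deriv κ s * h2 + τ s * h3
      rw [hval] at h1
      exact h1
    set W : ℝ → Fin 3 → ℝ := fun s => A s • T s + c • N s - G s • B s with hW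
    have hW' : ∀ s ∈ I, HasDerivAt W 0 s := by
      intro s hs
      have h1 := (((hA' s hs).smul (hT' s hs)).add ((hN' s hs).const_smul c)).sub
        ((hG' s hs).smul (hB' s hs))
      refine h1.congr_deriv (Eq.symm ?_)
      funext i
      simp only [hA, hG, Pi.add_apply, Pi.sub_apply, Pi.smul_apply, smul_eq_mul,
        Pi.zero_apply, Pi.neg_apply]
      ring
    have hWconst : ∀ s ∈ I, W s = W s₀ := fun s hs =>
      const_of_deriv_zero hIopen hIconn hW' hs hs₀
    refine ⟨W s₀, ?_, c, fun s hs => ?_⟩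
    · intro h
      have h2 : mink (W s₀) (B s₀) = G s₀ := by
        have e1 := hTB s₀ hs₀; have e2 := hNB s₀ hs₀; have e3 := hBB s₀ hs₀
        simp only [mink] at e1 e2 e3
        simp only [hW, mink, Pi.add_apply, Pi.sub_apply, Pi.smul_apply, smul_eq_mul]
        linear_combination (A s₀) * e1 + c * e2 - (G s₀) * e3
      rw [h] at h2
      simp only [mink, Pi.zero_apply, zero_mul, add_zero, sub_zero, zero_add, zero_sub, neg_zero] at h2
      exact (div_ne_zero (hκ0 s₀ hs₀) (hρ0 s₀ hs₀)) h2.symm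
    · rw [← hWconst s hs]
      have e1 := hTN s hs; have e2 := hNN s hs; have e3 := hNB s hs
      simp only [mink] at e1 e2 e3
      simp only [hW, mink, Pi.add_apply, Pi.sub_apply, Pi.smul_apply, smul_eq_mul]
      linear_combination (A s) * e1 + c * e2 - (G s) * e3
end

section
/- Let T, N, B : I → ℝ³ with torsion τ be a Frenet-framed unit speed lightlike curve in Minkowski 3-space on an open interval I. Then the curve is a slant helix (i.e. there is a constant vector U ≠ 0 with s ↦ ⟨N(s),U⟩ constant) if and only if there exist real constants a, b, c with a ≠ 0 and b·s + c ≠ 0 for all s ∈ I, such that τ(s) = a/(b·s + c)² for all s ∈ I. -/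
open Real

private lemma mink_deriv {X : ℝ → Fin 3 → ℝ} {v : Fin 3 → ℝ} {s : ℝ} (U : Fin 3 → ℝ)
    (h : HasDerivAt X v s) :
    HasDerivAt (fun t => mink (X t) U) (mink v U) s := by
  have hi : ∀ i, HasDerivAt (fun t => X t i) (v i) s := fun i => hasDerivAt_pi.mp h i
  have h2 := (((hi 0).mul_const (U 0)).add ((hi 1).mul_const (U 1))).sub ((hi 2).mul_const (U 2))
  unfold mink
  exact h2

private lemma const_of_deriv_zero_s7 {I : Set ℝ} (hIopen : IsOpen I) (hconv : Convex ℝ I)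
    {φ : ℝ → ℝ} (h : ∀ s ∈ I, HasDerivAt φ 0 s) {x y : ℝ} (hx : x ∈ I) (hy : y ∈ I) :
    φ x = φ y := by
  apply hconv.is_const_of_fderivWithin_eq_zero (f := φ)
    (fun s hs => (h s hs).differentiableAt.differentiableWithinAt) ?_ hx hy
  intro s hs
  rw [fderivWithin_of_isOpen hIopen hs]
  have h2 := (h s hs).hasFDerivAt.fderiv
  rw [h2]; ext; simp

private lemma hasDerivAt_zero_of_eqOn_const {I : Set ℝ} (hIopen : IsOpen I)
    {φ : ℝ → ℝ} {d : ℝ} (h : ∀ s ∈ I, φ s = d) {s : ℝ} (hs : s ∈ I) :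
    HasDerivAt φ 0 s := by
  have he : φ =ᶠ[nhds s] fun _ => d := by
    filter_upwards [hIopen.mem_nhds hs] with t ht using h t ht
  exact (hasDerivAt_const s d).congr_of_eventuallyEq he

private lemma mink_nondeg_s7 {t n b u : Fin 3 → ℝ}
    (htt : mink t t = 0) (hnn : mink n n = 1) (hbb : mink b b = 0)
    (htn : mink t n = 0) (htb : mink t b = 1) (hnb : mink n b = 0)
    (htu : mink t u = 0) (hnu : mink n u = 0) (hbu : mink b u = 0) : u = 0 := by
  set A : Matrix (Fin 3) (Fin 3) ℝ :=
    Matrix.of ![![t 0, t 1, -t 2], ![n 0, n 1, -n 2], ![b 0, b 1, -b 2]] with hA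
  have key : -(A.det ^ 2) =
      mink t t * (mink n n * mink b b - mink n b ^ 2)
        - mink t n * (mink t n * mink b b - mink n b * mink t b)
        + mink t b * (mink t n * mink n b - mink n n * mink t b) := by
    rw [Matrix.det_fin_three]
    simp only [hA, Matrix.of_apply, Matrix.cons_val', Matrix.cons_val_zero, Matrix.cons_val_one,
      Matrix.head_cons, Matrix.empty_val', Matrix.cons_val_fin_one, Matrix.cons_val_two,
      Matrix.tail_cons, Matrix.head_fin_const, mink]
    ring
  rw [htt, hnn, hbb, htn, htb, hnb] at key
  norm_num at key
  have hdet : IsUnit A.det := by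
    apply isUnit_iff_ne_zero.mpr
    intro h0
    rw [h0] at key; norm_num at key
  have htu' := htu; have hnu' := hnu; have hbu' := hbu
  simp only [mink] at htu' hnu' hbu'
  have hAu : A.mulVec u = 0 := by
    ext i
    fin_cases i <;>
    · simp [hA, Matrix.mulVec, dotProduct, Fin.sum_univ_three, Matrix.vecHead, Matrix.vecTail]
      linarith
  calc u = (1 : Matrix (Fin 3) (Fin 3) ℝ).mulVec u := (Matrix.one_mulVec u).symm
    _ = (A⁻¹ * A).mulVec u := by rw [Matrix.nonsing_inv_mul A hdet]
    _ = A⁻¹.mulVec (A.mulVec u) := by rw [Matrix.mulVec_mulVec]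
    _ = 0 := by rw [hAu, Matrix.mulVec_zero]

theorem stmt7
    (I : Set ℝ) (hIopen : IsOpen I) (hIconn : I.OrdConnected)
    (T N B : ℝ → Fin 3 → ℝ) (τ : ℝ → ℝ)
    (hTs : ContDiffOn ℝ (⊤ : ℕ∞) T I) (hNs : ContDiffOn ℝ (⊤ : ℕ∞) N I)
    (hBs : ContDiffOn ℝ (⊤ : ℕ∞) B I)
    (hτs : ContDiffOn ℝ (⊤ : ℕ∞) τ I) (hτ0 : ∀ s ∈ I, τ s ≠ 0)
    (hTT : ∀ s ∈ I, mink (T s) (T s) = 0)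
    (hNN : ∀ s ∈ I, mink (N s) (N s) = 1)
    (hBB : ∀ s ∈ I, mink (B s) (B s) = 0)
    (hTN : ∀ s ∈ I, mink (T s) (N s) = 0)
    (hTB : ∀ s ∈ I, mink (T s) (B s) = 1)
    (hNB : ∀ s ∈ I, mink (N s) (B s) = 0)
    (hT' : ∀ s ∈ I, HasDerivAt T (N s) s)
    (hN' : ∀ s ∈ I, HasDerivAt N (τ s • T s - B s) s)
    (hB' : ∀ s ∈ I, HasDerivAt B (-τ s • N s) s)
 :
    (∃ U : Fin 3 → ℝ, U ≠ 0 ∧ ∃ d : ℝ, ∀ s ∈ I, mink (N s) U = d) ↔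
      (∃ a b c : ℝ, a ≠ 0 ∧ (∀ s ∈ I, b * s + c ≠ 0) ∧
        ∀ s ∈ I, τ s = a / (b * s + c) ^ 2) := by
  have hconv : Convex ℝ I := hIconn.convex
  rcases Set.eq_empty_or_nonempty I with hIe | ⟨s₀, hs₀⟩
  · constructor
    · rintro -
      exact ⟨1, 0, 1, one_ne_zero, fun s hs => by simp [hIe] at hs,
        fun s hs => by simp [hIe] at hs⟩
    · rintro -
      refine ⟨fun _ => 1, ?_, 0, fun s hs => by simp [hIe] at hs⟩
      intro h; simpa using congrFun h 0
  constructor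
  · rintro ⟨U, hU, d, hd⟩
    set f : ℝ → ℝ := fun s => mink (T s) U with hf
    set h : ℝ → ℝ := fun s => mink (B s) U with hh
    have hf' : ∀ s ∈ I, HasDerivAt f d s := by
      intro s hs
      have h1 := mink_deriv U (hT' s hs)
      rwa [hd s hs] at h1
    have hg0 : ∀ s ∈ I, HasDerivAt (fun t => mink (N t) U) 0 s :=
      fun s hs => hasDerivAt_zero_of_eqOn_const hIopen (φ := fun t => mink (N t) U) hd hs
    have hfh : ∀ s ∈ I, h s = τ s * f s := by
      intro s hs
      have h1 := mink_deriv U (hN' s hs)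
      have h2 : mink (τ s • T s - B s) U = τ s * f s - h s := by
        simp only [mink, hf, hh, Pi.sub_apply, Pi.smul_apply, smul_eq_mul]
        ring
      rw [h2] at h1
      have h3 := h1.unique (hg0 s hs)
      linarith
    have hh' : ∀ s ∈ I, HasDerivAt h (-(τ s * d)) s := by
      intro s hs
      have h1 := mink_deriv U (hB' s hs)
      have h2 : mink (-τ s • N s) U = -(τ s * d) := by
        have e : mink (-τ s • N s) U = -τ s * mink (N s) U := by
          simp only [mink, Pi.smul_apply, smul_eq_mul]; ring
        rw [e, hd s hs]; ring
      rwa [h2] at h1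
    have hψ0 : ∀ s ∈ I, HasDerivAt (fun t => f t * h t) 0 s := by
      intro s hs
      have h1 := (hf' s hs).mul (hh' s hs)
      have e : d * h s + f s * -(τ s * d) = 0 := by rw [hfh s hs]; ring
      rwa [e] at h1
    have hψc : ∀ s ∈ I, f s * h s = f s₀ * h s₀ :=
      fun s hs => const_of_deriv_zero_s7 hIopen hconv hψ0 hs hs₀
    by_cases ha0 : f s₀ * h s₀ = 0
    · exfalso
      have hfz : ∀ s ∈ I, f s = 0 := by
        intro s hs
        have h1 := hψc s hs
        rw [ha0, hfh s hs] at h1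
        have h2 : τ s * f s ^ 2 = 0 := by linear_combination h1
        rcases mul_eq_zero.mp h2 with h3 | h3
        · exact absurd h3 (hτ0 s hs)
        · exact pow_eq_zero_iff (two_ne_zero) |>.mp h3
      apply hU
      have hd0 : d = 0 :=
        (hf' s₀ hs₀).unique (hasDerivAt_zero_of_eqOn_const hIopen hfz hs₀)
      have hN0 : mink (N s₀) U = 0 := by rw [hd s₀ hs₀, hd0]
      have hB0 : mink (B s₀) U = 0 := by
        have := hfh s₀ hs₀
        rw [hfz s₀ hs₀] at this
        simpa [hh] using this
      exact mink_nondeg_s7 (hTT s₀ hs₀) (hNN s₀ hs₀) (hBB s₀ hs₀) (hTN s₀ hs₀)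
        (hTB s₀ hs₀) (hNB s₀ hs₀) (hfz s₀ hs₀) hN0 hB0
    · refine ⟨f s₀ * h s₀, d, f s₀ - d * s₀, ha0, ?_, ?_⟩
      · intro s hs
        have hflin : f s = d * s + (f s₀ - d * s₀) := by
          have hc : ∀ u ∈ I, HasDerivAt (fun t => f t - d * t) 0 u := by
            intro u hu
            have h1 := (hf' u hu).sub ((hasDerivAt_id u).const_mul d)
            exact h1.congr_deriv (by simp)
          have h2 := const_of_deriv_zero_s7 hIopen hconv hc hs hs₀
          linarith
        rw [← hflin]
        intro h0
        apply ha0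
        have h1 := hψc s hs
        rw [hfh s hs, h0] at h1
        linarith [h1]
      · intro s hs
        have hflin : f s = d * s + (f s₀ - d * s₀) := by
          have hc : ∀ u ∈ I, HasDerivAt (fun t => f t - d * t) 0 u := by
            intro u hu
            have h1 := (hf' u hu).sub ((hasDerivAt_id u).const_mul d)
            exact h1.congr_deriv (by simp)
          have h2 := const_of_deriv_zero_s7 hIopen hconv hc hs hs₀
          linarith
        have hfne : f s ≠ 0 := by
          intro h0
          apply ha0
          have h1 := hψc s hs
          rw [hfh s hs, h0] at h1
          linarith [h1]
        have h1 := hψc s hs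
        rw [hfh s hs] at h1
        rw [← hflin]
        field_simp
        linear_combination h1
  · rintro ⟨a, b, c, ha, hbc, hτeq⟩
    set f : ℝ → ℝ := fun s => b * s + c with hf
    set W : ℝ → Fin 3 → ℝ := fun s => (a / f s) • T s + b • N s + f s • B s with hW
    have hWc : ∀ i, ∀ s ∈ I, W s i = W s₀ i := by
      intro i s hs
      refine const_of_deriv_zero_s7 hIopen hconv (φ := fun t => W t i) ?_ hs hs₀
      intro u hu
      have hfu : f u ≠ 0 := hbc u hu
      have hTd : HasDerivAt (fun t => T t i) (N u i) u := hasDerivAt_pi.mp (hT' u hu) i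
      have hNd : HasDerivAt (fun t => N t i) (τ u * T u i - B u i) u := by
        have h1 := hasDerivAt_pi.mp (hN' u hu) i
        simpa using h1
      have hBd : HasDerivAt (fun t => B t i) (-(τ u * N u i)) u := by
        have h1 := hasDerivAt_pi.mp (hB' u hu) i
        simpa using h1
      have hfd : HasDerivAt f b u := by
        have h1 := ((hasDerivAt_id u).const_mul b).add_const c
        simpa [hf] using h1
      have hqd : HasDerivAt (fun t => a / f t)
          ((0 * f u - a * b) / f u ^ 2) u := (hasDerivAt_const u a).div hfd hfu
      have key : HasDerivAt (fun t => a / f t * T t i + b * N t i + f t * B t i) 0 u := by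
        have h1 := ((hqd.mul hTd).add (hNd.const_mul b)).add (hfd.mul hBd)
        refine h1.congr_deriv ?_
        rw [hτeq u hu]
        have hfu2 : f u = b * u + c := rfl
        rw [← hfu2]
        field_simp
        ring
      have he : (fun t => W t i) = fun t => a / f t * T t i + b * N t i + f t * B t i := by
        funext t
        simp [hW, mul_comm]
      rw [he]
      exact key
    have hWU : ∀ s ∈ I, W s = W s₀ := by
      intro s hs; funext i; exact hWc i s hs
    have minkW : ∀ s, ∀ X : Fin 3 → ℝ, mink X (W s) =
        (a / f s) * mink X (T s) + b * mink X (N s) + f s * mink X (B s) := by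
      intro s X
      simp only [mink, hW, Pi.add_apply, Pi.smul_apply, smul_eq_mul]
      ring
    refine ⟨W s₀, ?_, b, ?_⟩
    · intro h0
      have h1 : mink (T s₀) (W s₀) = f s₀ := by
        rw [minkW s₀ (T s₀), hTT s₀ hs₀, hTN s₀ hs₀, hTB s₀ hs₀]
        field_simp
        ring
      rw [h0] at h1
      simp only [mink, Pi.zero_apply, mul_zero, add_zero, sub_zero] at h1
      exact hbc s₀ hs₀ h1.symm
    · intro s hs
      rw [← hWU s hs, minkW s (N s), hNN s hs]
      have hnt : mink (N s) (T s) = 0 := by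
        have h1 := hTN s hs
        simp only [mink] at h1 ⊢
        linarith
      rw [hnt, hNB s hs]
      ring
end

section
/- Let T, N, B : I → ℝ³ with curvature κ and torsion τ be a Frenet-framed unit speed timelike curve in Minkowski 3-space on an open interval I with τ(s)² − κ(s)² > 0 for all s ∈ I, and suppose there is a constant c ∈ ℝ with (κ(s)²/(τ(s)² − κ(s)²)^{3/2}) · (τ/κ)'(s) = c for all s ∈ I. Then the vector field U(s) = (τ(s)/√(τ(s)² − κ(s)²))·T(s) + c·N(s) + (κ(s)/√(τ(s)² − κ(s)²))·B(s) has zero derivative on I (hence is a constant nonzero vector), and ⟨N(s),U(s)⟩ = c for all s ∈ I. -/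
open Real

theorem stmt9
    (I : Set ℝ) (hIopen : IsOpen I) (hIconn : I.OrdConnected)
    (T N B : ℝ → Fin 3 → ℝ) (κ τ : ℝ → ℝ)
    (hTs : ContDiffOn ℝ (⊤ : ℕ∞) T I) (hNs : ContDiffOn ℝ (⊤ : ℕ∞) N I)
    (hBs : ContDiffOn ℝ (⊤ : ℕ∞) B I)
    (hκs : ContDiffOn ℝ (⊤ : ℕ∞) κ I) (hκ0 : ∀ s ∈ I, κ s ≠ 0)
    (hτs : ContDiffOn ℝ (⊤ : ℕ∞) τ I) (hτ0 : ∀ s ∈ I, τ s ≠ 0)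
    (hTT : ∀ s ∈ I, mink (T s) (T s) = -1)
    (hNN : ∀ s ∈ I, mink (N s) (N s) = 1)
    (hBB : ∀ s ∈ I, mink (B s) (B s) = 1)
    (hTN : ∀ s ∈ I, mink (T s) (N s) = 0)
    (hTB : ∀ s ∈ I, mink (T s) (B s) = 0)
    (hNB : ∀ s ∈ I, mink (N s) (B s) = 0)
    (hT' : ∀ s ∈ I, HasDerivAt T (κ s • N s) s)
    (hN' : ∀ s ∈ I, HasDerivAt N (κ s • T s + τ s • B s) s)
    (hB' : ∀ s ∈ I, HasDerivAt B (-τ s • N s) s)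
    (hpos : ∀ s ∈ I, τ s ^ 2 - κ s ^ 2 > 0)
    (c : ℝ)
    (hc : ∀ s ∈ I, κ s ^ 2 / (τ s ^ 2 - κ s ^ 2) ^ ((3 : ℝ) / 2) * deriv (fun u => τ u / κ u) s = c) :
    (∀ s ∈ I, HasDerivAt
      (fun u => (τ u / Real.sqrt (τ u ^ 2 - κ u ^ 2)) • T u + c • N u +
        (κ u / Real.sqrt (τ u ^ 2 - κ u ^ 2)) • B u) 0 s) ∧
    (∀ s ∈ I, ∀ t ∈ I,
      (τ s / Real.sqrt (τ s ^ 2 - κ s ^ 2)) • T s + c • N s +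
        (κ s / Real.sqrt (τ s ^ 2 - κ s ^ 2)) • B s =
      (τ t / Real.sqrt (τ t ^ 2 - κ t ^ 2)) • T t + c • N t +
        (κ t / Real.sqrt (τ t ^ 2 - κ t ^ 2)) • B t) ∧
    (∀ s ∈ I, (τ s / Real.sqrt (τ s ^ 2 - κ s ^ 2)) • T s + c • N s +
        (κ s / Real.sqrt (τ s ^ 2 - κ s ^ 2)) • B s ≠ 0) ∧
    (∀ s ∈ I, mink (N s) ((τ s / Real.sqrt (τ s ^ 2 - κ s ^ 2)) • T s + c • N s +
        (κ s / Real.sqrt (τ s ^ 2 - κ s ^ 2)) • B s) = c) := by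
  have hU : ∀ s ∈ I, HasDerivAt
      (fun u => (τ u / Real.sqrt (τ u ^ 2 - κ u ^ 2)) • T u + c • N u +
        (κ u / Real.sqrt (τ u ^ 2 - κ u ^ 2)) • B u) 0 s := by
    intro s hs
    have hx : (0:ℝ) < τ s ^ 2 - κ s ^ 2 := hpos s hs
    have hw0 : (0:ℝ) < Real.sqrt (τ s ^ 2 - κ s ^ 2) := Real.sqrt_pos.mpr hx
    have hwne : Real.sqrt (τ s ^ 2 - κ s ^ 2) ≠ 0 := hw0.ne'
    have hw2 : Real.sqrt (τ s ^ 2 - κ s ^ 2) ^ 2 = τ s ^ 2 - κ s ^ 2 := Real.sq_sqrt hx.le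
    have hκd : HasDerivAt κ (deriv κ s) s :=
      ((hκs.contDiffAt (hIopen.mem_nhds hs)).differentiableAt
        (by simp)).hasDerivAt
    have hτd : HasDerivAt τ (deriv τ s) s :=
      ((hτs.contDiffAt (hIopen.mem_nhds hs)).differentiableAt
        (by simp)).hasDerivAt
    have hκne := hκ0 s hs
    have hdiv : HasDerivAt (fun u => τ u / κ u)
        ((deriv τ s * κ s - τ s * deriv κ s) / κ s ^ 2) s := hτd.div hκd hκne
    have h32 : (τ s ^ 2 - κ s ^ 2) ^ ((3:ℝ)/2)
        = (τ s ^ 2 - κ s ^ 2) * Real.sqrt (τ s ^ 2 - κ s ^ 2) := by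
      rw [show (3:ℝ)/2 = 1 + 1/2 by norm_num, Real.rpow_add hx, Real.rpow_one,
        Real.sqrt_eq_rpow]
    have hcval : c * ((τ s ^ 2 - κ s ^ 2) * Real.sqrt (τ s ^ 2 - κ s ^ 2))
        = deriv τ s * κ s - τ s * deriv κ s := by
      rw [← hc s hs, hdiv.deriv, h32]
      field_simp
    have hxd : HasDerivAt (fun u => τ u ^ 2 - κ u ^ 2)
        (2 * τ s * deriv τ s - 2 * κ s * deriv κ s) s := by
      have := (hτd.pow 2).sub (hκd.pow 2)
      refine this.congr_deriv ?_
      norm_num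
    have hwd : HasDerivAt (fun u => Real.sqrt (τ u ^ 2 - κ u ^ 2))
        ((2 * τ s * deriv τ s - 2 * κ s * deriv κ s)
          / (2 * Real.sqrt (τ s ^ 2 - κ s ^ 2))) s := hxd.sqrt hx.ne'
    have hfd : HasDerivAt (fun u => τ u / Real.sqrt (τ u ^ 2 - κ u ^ 2))
        (-(c * κ s)) s := by
      have h := hτd.div hwd hwne
      refine h.congr_deriv ?_
      field_simp
      linear_combination (deriv τ s + c * κ s * Real.sqrt (τ s ^ 2 - κ s ^ 2)) * hw2
        + (κ s) * hcval
    have hgd : HasDerivAt (fun u => κ u / Real.sqrt (τ u ^ 2 - κ u ^ 2))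
        (-(c * τ s)) s := by
      have h := hκd.div hwd hwne
      refine h.congr_deriv ?_
      field_simp
      linear_combination (deriv κ s + c * τ s * Real.sqrt (τ s ^ 2 - κ s ^ 2)) * hw2
        + (τ s) * hcval
    have htot := ((hfd.smul (hT' s hs)).add ((hN' s hs).const_smul c)).add
      (hgd.smul (hB' s hs))
    refine htot.congr_deriv ?_
    funext i
    simp only [Pi.add_apply, Pi.smul_apply, Pi.neg_apply, smul_eq_mul, Pi.zero_apply,
      neg_mul, mul_neg]
    ring
  refine ⟨hU, ?_, ?_, ?_⟩
  · have hconv : Convex ℝ I := convex_iff_ordConnected.mpr hIconn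
    intro s hs t ht
    set F : ℝ → Fin 3 → ℝ := fun u => (τ u / Real.sqrt (τ u ^ 2 - κ u ^ 2)) • T u + c • N u +
        (κ u / Real.sqrt (τ u ^ 2 - κ u ^ 2)) • B u with hF
    have hdiffOn : DifferentiableOn ℝ F I := fun z hz =>
      ((hU z hz).differentiableAt).differentiableWithinAt
    have hfd0 : ∀ z ∈ I, fderivWithin ℝ F I z = 0 := by
      intro z hz
      have h0 : HasFDerivWithinAt F (0 : ℝ →L[ℝ] (Fin 3 → ℝ)) I z := by
        have := ((hU z hz).hasFDerivAt.hasFDerivWithinAt (s := I))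
        refine this.congr_fderiv ?_
        ext v
        simp
      rw [h0.fderivWithin (hIopen.uniqueDiffWithinAt hz)]
    exact hconv.is_const_of_fderivWithin_eq_zero hdiffOn hfd0 hs ht
  · intro s hs h0
    have hx : (0:ℝ) < τ s ^ 2 - κ s ^ 2 := hpos s hs
    have hw0 : (0:ℝ) < Real.sqrt (τ s ^ 2 - κ s ^ 2) := Real.sqrt_pos.mpr hx
    have hm : mink (T s) ((τ s / Real.sqrt (τ s ^ 2 - κ s ^ 2)) • T s + c • N s +
        (κ s / Real.sqrt (τ s ^ 2 - κ s ^ 2)) • B s)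
        = -(τ s / Real.sqrt (τ s ^ 2 - κ s ^ 2)) := by
      have e1 := hTT s hs; have e2 := hTN s hs; have e3 := hTB s hs
      simp only [mink, Pi.add_apply, Pi.smul_apply, smul_eq_mul] at *
      linear_combination (τ s / Real.sqrt (τ s ^ 2 - κ s ^ 2)) * e1 + c * e2 +
        (κ s / Real.sqrt (τ s ^ 2 - κ s ^ 2)) * e3
    rw [h0] at hm
    simp only [mink, Pi.zero_apply, mul_zero, sub_zero, add_zero] at hm
    have hne : τ s / Real.sqrt (τ s ^ 2 - κ s ^ 2) ≠ 0 :=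
      div_ne_zero (hτ0 s hs) hw0.ne'
    exact hne (by linarith)
  · intro s hs
    have e1 := hTN s hs; have e2 := hNN s hs; have e3 := hNB s hs
    simp only [mink, Pi.add_apply, Pi.smul_apply, smul_eq_mul] at *
    linear_combination (τ s / Real.sqrt (τ s ^ 2 - κ s ^ 2)) * e1 + c * e2 +
      (κ s / Real.sqrt (τ s ^ 2 - κ s ^ 2)) * e3
end

section
/- Let T, N, B : I → ℝ³ with torsion τ be a Frenet-framed unit speed lightlike curve in Minkowski 3-space on an open interval I, and let a, b, c ∈ ℝ with b·s + c ≠ 0 for all s ∈ I and τ(s) = a/(b·s + c)² for all s ∈ I. Then the vector field U(s) = (a/(b·s + c))·T(s) + b·N(s) + (b·s + c)·B(s) has zero derivative on I (hence is a constant nonzero vector), and ⟨N(s),U(s)⟩ = b for all s ∈ I; in particular the curve is a slant helix. -/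
open Real

theorem stmt12
    (I : Set ℝ) (hIopen : IsOpen I) (hIconn : I.OrdConnected)
    (T N B : ℝ → Fin 3 → ℝ) (τ : ℝ → ℝ)
    (hTs : ContDiffOn ℝ (⊤ : ℕ∞) T I) (hNs : ContDiffOn ℝ (⊤ : ℕ∞) N I)
    (hBs : ContDiffOn ℝ (⊤ : ℕ∞) B I)
    (hτs : ContDiffOn ℝ (⊤ : ℕ∞) τ I) (hτ0 : ∀ s ∈ I, τ s ≠ 0)
    (hTT : ∀ s ∈ I, mink (T s) (T s) = 0)
    (hNN : ∀ s ∈ I, mink (N s) (N s) = 1)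
    (hBB : ∀ s ∈ I, mink (B s) (B s) = 0)
    (hTN : ∀ s ∈ I, mink (T s) (N s) = 0)
    (hTB : ∀ s ∈ I, mink (T s) (B s) = 1)
    (hNB : ∀ s ∈ I, mink (N s) (B s) = 0)
    (hT' : ∀ s ∈ I, HasDerivAt T (N s) s)
    (hN' : ∀ s ∈ I, HasDerivAt N (τ s • T s - B s) s)
    (hB' : ∀ s ∈ I, HasDerivAt B (-τ s • N s) s)
    (a b c : ℝ) (hbc : ∀ s ∈ I, b * s + c ≠ 0)
    (hτeq : ∀ s ∈ I, τ s = a / (b * s + c) ^ 2) :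
    (∀ s ∈ I, HasDerivAt
      (fun u => (a / (b * u + c)) • T u + b • N u + (b * u + c) • B u) 0 s) ∧
    (∀ s ∈ I, ∀ t ∈ I,
      (a / (b * s + c)) • T s + b • N s + (b * s + c) • B s =
      (a / (b * t + c)) • T t + b • N t + (b * t + c) • B t) ∧
    (∀ s ∈ I, (a / (b * s + c)) • T s + b • N s + (b * s + c) • B s ≠ 0) ∧
    (∀ s ∈ I, mink (N s) ((a / (b * s + c)) • T s + b • N s + (b * s + c) • B s) = b) ∧
    (∃ U : Fin 3 → ℝ, U ≠ 0 ∧ ∃ d : ℝ, ∀ s ∈ I, mink (N s) U = d) := by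
  set U : ℝ → Fin 3 → ℝ := fun u => (a / (b * u + c)) • T u + b • N u + (b * u + c) • B u with hU
  have hderiv : ∀ s ∈ I, HasDerivAt U 0 s := by
    intro s hs
    have hlin : HasDerivAt (fun u : ℝ => b * u + c) b s := by
      simpa using ((hasDerivAt_id s).const_mul b).add_const c
    have hsc : HasDerivAt (fun u : ℝ => a / (b * u + c))
        ((0 * (b * s + c) - a * b) / (b * s + c) ^ 2) s :=
      (hasDerivAt_const s a).div hlin (hbc s hs)
    have h1 := hsc.smul (hT' s hs)
    have h2 := (hN' s hs).const_smul b
    have h3 := hlin.smul (hB' s hs)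
    have h := (h1.add h2).add h3
    refine h.congr_deriv ?_
    have hne := hbc s hs
    rw [hτeq s hs]
    funext i
    simp only [Pi.add_apply, Pi.smul_apply, Pi.sub_apply, Pi.zero_apply, Pi.neg_apply,
      smul_eq_mul, neg_mul]
    field_simp
    ring
  refine ⟨hderiv, ?_, ?_, ?_, ?_⟩
  · intro s hs t ht
    have hconv : Convex ℝ I := hIconn.convex
    have hdiff : DifferentiableOn ℝ U I := fun z hz => ((hderiv z hz).differentiableAt).differentiableWithinAt
    refine hconv.is_const_of_fderivWithin_eq_zero hdiff (fun z hz => ?_) hs ht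
    have h0 : HasFDerivAt U (0 : ℝ →L[ℝ] Fin 3 → ℝ) z := by
      have h := (hderiv z hz).hasFDerivAt
      convert h using 1
      ext x
      simp
      simp
    exact (h0.hasFDerivWithinAt.fderivWithin (hIopen.uniqueDiffOn z hz))
  · intro s hs h0
    have h0' : U s = 0 := h0
    have : mink (T s) (U s) = b * s + c := by
      simp only [hU, mink, Pi.add_apply, Pi.smul_apply, smul_eq_mul]
      have e1 := hTT s hs; have e2 := hTN s hs; have e3 := hTB s hs
      simp only [mink] at e1 e2 e3
      linear_combination (a / (b * s + c)) * e1 + b * e2 + (b * s + c) * e3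
    rw [h0'] at this
    simp only [mink, Pi.zero_apply] at this
    exact hbc s hs (by linarith)
  · intro s hs
    simp only [hU, mink, Pi.add_apply, Pi.smul_apply, smul_eq_mul]
    have e1 := hTN s hs; have e2 := hNN s hs; have e3 := hNB s hs
    simp only [mink] at e1 e2 e3
    linear_combination (a / (b * s + c)) * e1 + b * e2 + (b * s + c) * e3
  · by_cases hne : I.Nonempty
    · obtain ⟨s0, hs0⟩ := hne
      refine ⟨U s0, ?_, b, ?_⟩
      · intro h0
        have : mink (T s0) (U s0) = b * s0 + c := by
          simp only [hU, mink, Pi.add_apply, Pi.smul_apply, smul_eq_mul]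
          have e1 := hTT s0 hs0; have e2 := hTN s0 hs0; have e3 := hTB s0 hs0
          simp only [mink] at e1 e2 e3
          linear_combination (a / (b * s0 + c)) * e1 + b * e2 + (b * s0 + c) * e3
        rw [h0] at this
        simp only [mink, Pi.zero_apply] at this
        exact hbc s0 hs0 (by linarith)
      · intro s hs
        have hconst : U s = U s0 := by
          have hconv : Convex ℝ I := hIconn.convex
          have hdiff : DifferentiableOn ℝ U I := fun z hz => ((hderiv z hz).differentiableAt).differentiableWithinAt
          refine hconv.is_const_of_fderivWithin_eq_zero hdiff (fun z hz => ?_) hs hs0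
          have h0 : HasFDerivAt U (0 : ℝ →L[ℝ] Fin 3 → ℝ) z := by
            have h := (hderiv z hz).hasFDerivAt
            convert h using 1
            ext x
            simp
            simp
          exact (h0.hasFDerivWithinAt.fderivWithin (hIopen.uniqueDiffOn z hz))
        rw [← hconst]
        simp only [hU, mink, Pi.add_apply, Pi.smul_apply, smul_eq_mul]
        have e1 := hTN s hs; have e2 := hNN s hs; have e3 := hNB s hs
        simp only [mink] at e1 e2 e3
        linear_combination (a / (b * s + c)) * e1 + b * e2 + (b * s + c) * e3
    · exact ⟨fun _ => 1, by intro h; simpa using congrFun h 0, 0, fun s hs => absurd ⟨s, hs⟩ hne⟩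
end

section
/- Let T, N, B : I → ℝ³ with torsion τ be a Frenet-framed unit speed lightlike curve in Minkowski 3-space on an open interval I, and suppose the curve is a slant helix, i.e. there is a constant vector U ≠ 0 with s ↦ ⟨N(s),U⟩ constant on I. Then there exist real constants n, c, m with c·s + m ≠ 0 for all s ∈ I such that τ(s) = n/(c·s + m)² for all s ∈ I. -/
open Real

theorem stmt13
    (I : Set ℝ) (hIopen : IsOpen I) (hIconn : I.OrdConnected)
    (T N B : ℝ → Fin 3 → ℝ) (τ : ℝ → ℝ)
    (hTs : ContDiffOn ℝ (⊤ : ℕ∞) T I) (hNs : ContDiffOn ℝ (⊤ : ℕ∞) N I)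
    (hBs : ContDiffOn ℝ (⊤ : ℕ∞) B I)
    (hτs : ContDiffOn ℝ (⊤ : ℕ∞) τ I) (hτ0 : ∀ s ∈ I, τ s ≠ 0)
    (hTT : ∀ s ∈ I, mink (T s) (T s) = 0)
    (hNN : ∀ s ∈ I, mink (N s) (N s) = 1)
    (hBB : ∀ s ∈ I, mink (B s) (B s) = 0)
    (hTN : ∀ s ∈ I, mink (T s) (N s) = 0)
    (hTB : ∀ s ∈ I, mink (T s) (B s) = 1)
    (hNB : ∀ s ∈ I, mink (N s) (B s) = 0)
    (hT' : ∀ s ∈ I, HasDerivAt T (N s) s)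
    (hN' : ∀ s ∈ I, HasDerivAt N (τ s • T s - B s) s)
    (hB' : ∀ s ∈ I, HasDerivAt B (-τ s • N s) s)
    (U : Fin 3 → ℝ) (hU0 : U ≠ 0) (d : ℝ) (hU : ∀ s ∈ I, mink (N s) U = d) :
    ∃ n c m : ℝ, (∀ s ∈ I, c * s + m ≠ 0) ∧
      ∀ s ∈ I, τ s = n / (c * s + m) ^ 2 := by
  rcases I.eq_empty_or_nonempty with hIe | ⟨s₀, hs₀⟩
  · exact ⟨0, 0, 1, by simp [hIe], by simp [hIe]⟩
  have hconv : Convex ℝ I := convex_iff_ordConnected.mpr hIconn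
  -- constancy principle
  have hkey : ∀ φ : ℝ → ℝ, (∀ s ∈ I, HasDerivAt φ 0 s) → ∀ s ∈ I, φ s = φ s₀ := by
    intro φ hφ s hs
    refine hconv.is_const_of_fderivWithin_eq_zero
      (fun x hx => (hφ x hx).differentiableAt.differentiableWithinAt)
      (fun x hx => ?_) hs hs₀
    have h2 := ((hφ x hx).hasFDerivAt.hasFDerivWithinAt).fderivWithin
      (hIopen.uniqueDiffOn x hx)
    rw [h2]; ext y; simp
  set f : ℝ → ℝ := fun s => mink (T s) U with hfdef
  set g : ℝ → ℝ := fun s => mink (N s) U with hgdef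
  set h : ℝ → ℝ := fun s => mink (B s) U with hhdef
  -- derivative of f
  have hfd : ∀ s ∈ I, HasDerivAt f d s := by
    intro s hs
    have h0 := hasDerivAt_pi.mp (hT' s hs)
    have : HasDerivAt (fun x => T x 0 * U 0 + T x 1 * U 1 - T x 2 * U 2)
        (N s 0 * U 0 + N s 1 * U 1 - N s 2 * U 2) s :=
      (((h0 0).mul_const _).add ((h0 1).mul_const _)).sub ((h0 2).mul_const _)
    have e : N s 0 * U 0 + N s 1 * U 1 - N s 2 * U 2 = d := hU s hs
    rw [e] at this
    exact this
  -- derivative of g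
  have hgd : ∀ s ∈ I, HasDerivAt g (τ s * f s - h s) s := by
    intro s hs
    have h0 := hasDerivAt_pi.mp (hN' s hs)
    have key : HasDerivAt (fun x => N x 0 * U 0 + N x 1 * U 1 - N x 2 * U 2)
        ((τ s * T s 0 - B s 0) * U 0 + (τ s * T s 1 - B s 1) * U 1
          - (τ s * T s 2 - B s 2) * U 2) s := by
      have := (((h0 0).mul_const (U 0)).add ((h0 1).mul_const (U 1))).sub
        ((h0 2).mul_const (U 2))
      simp only [Pi.sub_apply, Pi.smul_apply, smul_eq_mul] at this
      exact this
    have e2 : (τ s * T s 0 - B s 0) * U 0 + (τ s * T s 1 - B s 1) * U 1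
        - (τ s * T s 2 - B s 2) * U 2 = τ s * f s - h s := by
      simp only [hfdef, hhdef, mink]; ring
    rw [e2] at key
    exact key
  -- derivative of h
  have hhd : ∀ s ∈ I, HasDerivAt h (-(τ s * d)) s := by
    intro s hs
    have h0 := hasDerivAt_pi.mp (hB' s hs)
    have key : HasDerivAt (fun x => B x 0 * U 0 + B x 1 * U 1 - B x 2 * U 2)
        ((-τ s * N s 0) * U 0 + (-τ s * N s 1) * U 1 - (-τ s * N s 2) * U 2) s := by
      have := (((h0 0).mul_const (U 0)).add ((h0 1).mul_const (U 1))).sub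
        ((h0 2).mul_const (U 2))
      simp only [Pi.smul_apply, Pi.neg_apply, smul_eq_mul] at this
      exact this
    have e2 : (-τ s * N s 0) * U 0 + (-τ s * N s 1) * U 1 - (-τ s * N s 2) * U 2
        = -(τ s * d) := by
      have := hU s hs
      simp only [mink] at this
      linear_combination (-τ s) * this
    rw [e2] at key
    exact key
  -- g is constant d, so h = τ f on I
  have hgconst : ∀ s ∈ I, HasDerivAt g 0 s := by
    intro s hs
    exact (hasDerivAt_const s d).congr_of_eventuallyEq
      (by filter_upwards [hIopen.mem_nhds hs] with x hx; exact hU x hx)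
  have hhf : ∀ s ∈ I, h s = τ s * f s := by
    intro s hs
    have := (hgd s hs).unique (hgconst s hs)
    linarith
  -- f s = d * s + m
  set m : ℝ := f s₀ - d * s₀ with hmdef
  have hfval : ∀ s ∈ I, f s = d * s + m := by
    intro s hs
    have hz : ∀ x ∈ I, HasDerivAt (fun x => f x - d * x) 0 x := by
      intro x hx
      have := (hfd x hx).sub ((hasDerivAt_id x).const_mul d)
      simp only [mul_one, sub_self] at this
      exact this
    have := hkey _ hz s hs
    linarith
  -- τ has derivative
  have hτd : ∀ s ∈ I, HasDerivAt τ (deriv τ s) s := by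
    intro s hs
    exact ((hτs.contDiffAt (hIopen.mem_nhds hs)).differentiableAt (by simp)).hasDerivAt
  -- the ODE: deriv τ * f + 2 τ d = 0
  have hODE : ∀ s ∈ I, deriv τ s * f s + 2 * τ s * d = 0 := by
    intro s hs
    have h1 : HasDerivAt (fun x => τ x * f x) (deriv τ s * f s + τ s * d) s :=
      (hτd s hs).mul (hfd s hs)
    have h2 : HasDerivAt h (deriv τ s * f s + τ s * d) s := by
      refine h1.congr_of_eventuallyEq ?_
      filter_upwards [hIopen.mem_nhds hs] with x hx
      exact hhf x hx
    have := h2.unique (hhd s hs)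
    linarith
  -- τ f² is constant
  have hψ : ∀ s ∈ I, τ s * f s ^ 2 = τ s₀ * f s₀ ^ 2 := by
    have hz : ∀ x ∈ I, HasDerivAt (fun x => τ x * f x ^ 2) 0 x := by
      intro x hx
      have hp : HasDerivAt (fun y => f y ^ 2) (2 * f x ^ 1 * d) x := (hfd x hx).pow 2
      have := (hτd x hx).mul hp
      have e : deriv τ x * f x ^ 2 + τ x * (2 * f x ^ 1 * d) = 0 := by
        linear_combination f x * hODE x hx
      rw [e] at this
      exact this
    exact hkey _ hz
  by_cases hf0 : ∀ s ∈ I, f s ≠ 0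
  · refine ⟨τ s₀ * f s₀ ^ 2, d, m, fun s hs => ?_, fun s hs => ?_⟩
    · rw [← hfval s hs]; exact hf0 s hs
    · rw [← hfval s hs]
      rw [eq_div_iff (pow_ne_zero 2 (hf0 s hs))]
      linarith [hψ s hs]
  · exfalso
    push_neg at hf0
    obtain ⟨s₁, hs₁, hfs₁⟩ := hf0
    have hd0 : d = 0 := by
      have := hODE s₁ hs₁
      rw [hfs₁] at this
      have hτ1 := hτ0 s₁ hs₁
      have : 2 * τ s₁ * d = 0 := by linarith
      rcases mul_eq_zero.mp this with h' | h'
      · exact absurd (by rcases mul_eq_zero.mp h' with h'' | h'' <;> [linarith; exact h'']) hτ1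
      · exact h'
    have hm0 : m = 0 := by
      have := hfval s₁ hs₁; rw [hfs₁, hd0] at this; linarith
    have hfz : ∀ s ∈ I, f s = 0 := by
      intro s hs; rw [hfval s hs, hd0, hm0]; ring
    have hhz : ∀ s ∈ I, h s = 0 := by
      intro s hs; rw [hhf s hs, hfz s hs]; ring
    -- linear algebra: U ⊥ T, N, B at s₀ with nondegenerate Gram ⇒ U = 0
    apply hU0
    have hfT : mink (T s₀) U = 0 := hfz s₀ hs₀
    have hfN : mink (N s₀) U = 0 := by rw [hU s₀ hs₀, hd0]
    have hfB : mink (B s₀) U = 0 := hhz s₀ hs₀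
    have hTT' := hTT s₀ hs₀; have hNN' := hNN s₀ hs₀; have hBB' := hBB s₀ hs₀
    have hTN' := hTN s₀ hs₀; have hTB' := hTB s₀ hs₀; have hNB' := hNB s₀ hs₀
    simp only [mink] at hfT hfN hfB hTT' hNN' hBB' hTN' hTB' hNB'
    set M : Matrix (Fin 3) (Fin 3) ℝ :=
      !![T s₀ 0, T s₀ 1, T s₀ 2; N s₀ 0, N s₀ 1, N s₀ 2; B s₀ 0, B s₀ 1, B s₀ 2] with hM
    set J : Matrix (Fin 3) (Fin 3) ℝ := !![1,0,0;0,1,0;0,0,-1] with hJ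
    have hGram : M * J * M.transpose = !![0,0,1;0,1,0;1,0,0] := by
      ext i j
      fin_cases i <;> fin_cases j <;>
        simp [hM, hJ, Matrix.mul_apply, Fin.sum_univ_three, Matrix.vecHead, Matrix.vecTail,
          Matrix.transpose, Matrix.of_apply, Function.comp] <;>
        first
          | linear_combination hTT' | linear_combination hTN'
          | linear_combination hTB' | linear_combination hNN'
          | linear_combination hNB' | linear_combination hBB'
    have hdet : M.det * M.det = 1 := by
      have h1 : (M * J * M.transpose).det = (-1 : ℝ) := by
        rw [hGram]
        rw [Matrix.det_fin_three]; simp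
      rw [Matrix.det_mul, Matrix.det_mul, Matrix.det_transpose] at h1
      have hJd : J.det = -1 := by rw [hJ, Matrix.det_fin_three]; simp
      rw [hJd] at h1
      linear_combination -h1
    have hMunit : IsUnit M := by
      rw [Matrix.isUnit_iff_isUnit_det]
      refine isUnit_iff_ne_zero.mpr ?_
      intro h0
      rw [h0] at hdet; norm_num at hdet
    have hinj : Function.Injective M.mulVec := Matrix.mulVec_injective_iff_isUnit.mpr hMunit
    have hv : M.mulVec ![U 0, U 1, -U 2] = 0 := by
      funext i
      fin_cases i <;>
        simp [hM, Matrix.mulVec, dotProduct, Fin.sum_univ_three] <;>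
        first
          | linear_combination hfT | linear_combination hfN | linear_combination hfB
    have hv0 : (![U 0, U 1, -U 2] : Fin 3 → ℝ) = 0 := by
      apply hinj
      rw [hv, Matrix.mulVec_zero]
    funext i
    fin_cases i
    · exact congrFun hv0 0
    · exact congrFun hv0 1
    · have := congrFun hv0 2
      simp only [Matrix.cons_val_two, Matrix.tail_cons, Matrix.head_cons, Pi.zero_apply] at this
      simpa using (neg_eq_zero.mp this)
end

section
/- Let T, N, B : I → ℝ³ with curvature κ and torsion τ be a Frenet-framed unit speed timelike curve in Minkowski 3-space on an open interval I with τ(s)² − κ(s)² > 0 for all s ∈ I, and suppose the curve is a slant helix with associated constant vector U ≠ 0, where c := ⟨N(s),U⟩ is the constant value. Then there exists a constant m > 0 such that for all s ∈ I, (κ(s)²/(τ(s)² − κ(s)²)^{3/2}) · (τ/κ)'(s) = c/m or for all s ∈ I, (κ(s)²/(τ(s)² − κ(s)²)^{3/2}) · (τ/κ)'(s) = −c/m. -/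
open Real

lemma mink_hasDerivAt {F : ℝ → Fin 3 → ℝ} {v U : Fin 3 → ℝ} {s : ℝ}
    (h : HasDerivAt F v s) : HasDerivAt (fun t => mink (F t) U) (mink v U) s := by
  have h' := hasDerivAt_pi.mp h
  unfold mink
  exact (((h' 0).mul_const (U 0)).add ((h' 1).mul_const (U 1))).sub ((h' 2).mul_const (U 2))

lemma isConst_of_hasDerivAt_zero {f : ℝ → ℝ} {I : Set ℝ} (hIopen : IsOpen I)
    (hIconn : I.OrdConnected) (hf : ∀ x ∈ I, HasDerivAt f 0 x) :
    ∀ x ∈ I, ∀ y ∈ I, f x = f y := by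
  intro x hx y hy
  have hconv : Convex ℝ I := hIconn.convex
  refine hconv.is_const_of_fderivWithin_eq_zero (𝕜 := ℝ)
    (fun z hz => ((hf z hz).differentiableAt).differentiableWithinAt) ?_ hx hy
  intro z hz
  rw [fderivWithin_of_isOpen hIopen hz, (hf z hz).hasFDerivAt.fderiv]
  ext
  simp

lemma frame_nondeg (t0 t1 t2 n0 n1 n2 b0 b1 b2 u0 u1 u2 : ℝ)
    (hTT : t0*t0 + t1*t1 - t2*t2 = -1) (hNN : n0*n0 + n1*n1 - n2*n2 = 1)
    (hBB : b0*b0 + b1*b1 - b2*b2 = 1) (hTN : t0*n0 + t1*n1 - t2*n2 = 0)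
    (hTB : t0*b0 + t1*b1 - t2*b2 = 0) (hNB : n0*b0 + n1*b1 - n2*b2 = 0)
    (h1 : t0*u0 + t1*u1 - t2*u2 = 0) (h2 : n0*u0 + n1*u1 - n2*u2 = 0)
    (h3 : b0*u0 + b1*u1 - b2*u2 = 0) : u0 = 0 ∧ u1 = 0 ∧ u2 = 0 := by
  set D : ℝ := t0*(n1*b2 - n2*b1) - t1*(n0*b2 - n2*b0) + t2*(n0*b1 - n1*b0) with hD
  have hId : D * D = -((t0*t0 + t1*t1 - t2*t2) * ((n0*n0 + n1*n1 - n2*n2) * (b0*b0 + b1*b1 - b2*b2)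
      - (n0*b0 + n1*b1 - n2*b2) * (n0*b0 + n1*b1 - n2*b2))
      - (t0*n0 + t1*n1 - t2*n2) * ((t0*n0 + t1*n1 - t2*n2) * (b0*b0 + b1*b1 - b2*b2)
      - (n0*b0 + n1*b1 - n2*b2) * (t0*b0 + t1*b1 - t2*b2))
      + (t0*b0 + t1*b1 - t2*b2) * ((t0*n0 + t1*n1 - t2*n2) * (n0*b0 + n1*b1 - n2*b2)
      - (n0*n0 + n1*n1 - n2*n2) * (t0*b0 + t1*b1 - t2*b2))) := by
    rw [hD]; ring
  rw [hTT, hNN, hBB, hTN, hTB, hNB] at hId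
  have hD2 : D * D = 1 := by linarith [hId]
  have hDne : D ≠ 0 := by intro h; rw [h] at hD2; simp at hD2
  have e0 : D * u0 = 0 := by
    linear_combination -((n1*(-b2) - (-n2)*b1) * h1 - (t1*(-b2) - (-t2)*b1) * h2 + (t1*(-n2) - (-t2)*n1) * h3)
  have e1 : D * u1 = 0 := by
    linear_combination -((-(n0*(-b2) - (-n2)*b0)) * h1 + (t0*(-b2) - (-t2)*b0) * h2 - (t0*(-n2) - (-t2)*n0) * h3)
  have e2 : D * u2 = 0 := by
    linear_combination (-(n0*b1 - n1*b0)) * h1 + (t0*b1 - t1*b0) * h2 - (t0*n1 - t1*n0) * h3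
  exact ⟨by rcases mul_eq_zero.mp e0 with h|h; exact absurd h hDne; exact h,
    by rcases mul_eq_zero.mp e1 with h|h; exact absurd h hDne; exact h,
    by rcases mul_eq_zero.mp e2 with h|h; exact absurd h hDne; exact h⟩

theorem stmt14
    (I : Set ℝ) (hIopen : IsOpen I) (hIconn : I.OrdConnected)
    (T N B : ℝ → Fin 3 → ℝ) (κ τ : ℝ → ℝ)
    (hTs : ContDiffOn ℝ (⊤ : ℕ∞) T I) (hNs : ContDiffOn ℝ (⊤ : ℕ∞) N I)
    (hBs : ContDiffOn ℝ (⊤ : ℕ∞) B I)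
    (hκs : ContDiffOn ℝ (⊤ : ℕ∞) κ I) (hκ0 : ∀ s ∈ I, κ s ≠ 0)
    (hτs : ContDiffOn ℝ (⊤ : ℕ∞) τ I) (hτ0 : ∀ s ∈ I, τ s ≠ 0)
    (hTT : ∀ s ∈ I, mink (T s) (T s) = -1)
    (hNN : ∀ s ∈ I, mink (N s) (N s) = 1)
    (hBB : ∀ s ∈ I, mink (B s) (B s) = 1)
    (hTN : ∀ s ∈ I, mink (T s) (N s) = 0)
    (hTB : ∀ s ∈ I, mink (T s) (B s) = 0)
    (hNB : ∀ s ∈ I, mink (N s) (B s) = 0)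
    (hT' : ∀ s ∈ I, HasDerivAt T (κ s • N s) s)
    (hN' : ∀ s ∈ I, HasDerivAt N (κ s • T s + τ s • B s) s)
    (hB' : ∀ s ∈ I, HasDerivAt B (-τ s • N s) s)
    (hpos : ∀ s ∈ I, τ s ^ 2 - κ s ^ 2 > 0)
    (U : Fin 3 → ℝ) (hU0 : U ≠ 0) (c : ℝ) (hU : ∀ s ∈ I, mink (N s) U = c) :
    ∃ m : ℝ, 0 < m ∧
      ((∀ s ∈ I, κ s ^ 2 / (τ s ^ 2 - κ s ^ 2) ^ ((3 : ℝ) / 2) * deriv (fun u => τ u / κ u) s = c / m) ∨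
       (∀ s ∈ I, κ s ^ 2 / (τ s ^ 2 - κ s ^ 2) ^ ((3 : ℝ) / 2) * deriv (fun u => τ u / κ u) s = -(c / m))) := by
  by_cases hne : I.Nonempty
  swap
  · exact ⟨1, one_pos, Or.inl fun s hs => absurd ⟨s, hs⟩ hne⟩
  obtain ⟨s₀, hs₀⟩ := hne
  set A : ℝ → ℝ := fun s => mink (T s) U with hAdef
  set Bf : ℝ → ℝ := fun s => mink (B s) U with hBdef
  have hA' : ∀ s ∈ I, HasDerivAt A (κ s * c) s := by
    intro s hs
    have h := mink_hasDerivAt (U := U) (hT' s hs)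
    have e : mink (κ s • N s) U = κ s * c := by
      rw [← hU s hs]; simp [mink]; ring
    rwa [e] at h
  have hBf' : ∀ s ∈ I, HasDerivAt Bf (-(τ s * c)) s := by
    intro s hs
    have h := mink_hasDerivAt (U := U) (hB' s hs)
    have e : mink (-τ s • N s) U = -(τ s * c) := by
      rw [← hU s hs]; simp [mink]; ring
    rwa [e] at h
  have hE1 : ∀ s ∈ I, κ s * A s + τ s * Bf s = 0 := by
    intro s hs
    have h1 := mink_hasDerivAt (U := U) (hN' s hs)
    have e : mink (κ s • T s + τ s • B s) U = κ s * A s + τ s * Bf s := by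
      simp [mink, hAdef, hBdef]; ring
    rw [e] at h1
    have heq : (fun t => mink (N t) U) =ᶠ[nhds s] fun _ => c :=
      Filter.eventuallyEq_of_mem (hIopen.mem_nhds hs) (fun t ht => hU t ht)
    have h2 : HasDerivAt (fun t => mink (N t) U) 0 s :=
      (hasDerivAt_const s c).congr_of_eventuallyEq heq
    exact h1.unique h2
  have hconst : ∀ s ∈ I, A s * A s - Bf s * Bf s = A s₀ * A s₀ - Bf s₀ * Bf s₀ := by
    intro s hs
    refine isConst_of_hasDerivAt_zero (f := fun x => A x * A x - Bf x * Bf x) hIopen hIconn ?_ s hs s₀ hs₀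
    intro x hx
    have h := ((hA' x hx).mul (hA' x hx)).sub ((hBf' x hx).mul (hBf' x hx))
    have hval : κ x * c * A x + A x * (κ x * c) - (-(τ x * c) * Bf x + Bf x * -(τ x * c)) = 0 := by
      linear_combination 2 * c * (hE1 x hx)
    rwa [hval] at h
  set K : ℝ := A s₀ * A s₀ - Bf s₀ * Bf s₀ with hKdef
  have hA_eq : ∀ s ∈ I, A s = -(τ s / κ s) * Bf s := by
    intro s hs
    have hk := hκ0 s hs
    field_simp
    linear_combination (hE1 s hs)
  have hgsq : ∀ s ∈ I, Bf s * Bf s * (τ s ^ 2 - κ s ^ 2) / (κ s) ^ 2 = K := by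
    intro s hs
    rw [← hconst s hs, hA_eq s hs]
    have hk := hκ0 s hs
    field_simp
  have hKnonneg : 0 ≤ K := by
    rw [← hgsq s₀ hs₀]
    apply div_nonneg _ (sq_nonneg _)
    nlinarith [hpos s₀ hs₀, mul_self_nonneg (Bf s₀)]
  by_cases hK0 : K = 0
  · exfalso
    have hBf0 : ∀ s ∈ I, Bf s = 0 := by
      intro s hs
      have h := hgsq s hs
      rw [hK0] at h
      have hk2 : (κ s) ^ 2 ≠ 0 := pow_ne_zero 2 (hκ0 s hs)
      rw [div_eq_zero_iff] at h
      rcases h with h | h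
      · rcases mul_eq_zero.mp h with h' | h'
        · exact mul_self_eq_zero.mp h'
        · exact absurd h' (hpos s hs).ne'
      · exact absurd h hk2
    have hA0 : ∀ s ∈ I, A s = 0 := by
      intro s hs
      rw [hA_eq s hs, hBf0 s hs]; ring
    by_cases hc : c = 0
    · have h2 : mink (N s₀) U = 0 := by rw [hU s₀ hs₀, hc]
      obtain ⟨e0, e1, e2⟩ := frame_nondeg (T s₀ 0) (T s₀ 1) (T s₀ 2) (N s₀ 0) (N s₀ 1) (N s₀ 2)
        (B s₀ 0) (B s₀ 1) (B s₀ 2) (U 0) (U 1) (U 2)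
        (hTT s₀ hs₀) (hNN s₀ hs₀) (hBB s₀ hs₀) (hTN s₀ hs₀) (hTB s₀ hs₀) (hNB s₀ hs₀)
        (hA0 s₀ hs₀) h2 (hBf0 s₀ hs₀)
      apply hU0
      funext i; fin_cases i <;> assumption
    · have hzero : HasDerivAt A 0 s₀ :=
        (hasDerivAt_const s₀ (0:ℝ)).congr_of_eventuallyEq
          (Filter.eventuallyEq_of_mem (hIopen.mem_nhds hs₀) (fun t ht => hA0 t ht))
      have hu := (hA' s₀ hs₀).unique hzero
      exact (mul_ne_zero (hκ0 s₀ hs₀) hc) hu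
  · have hKpos : 0 < K := lt_of_le_of_ne hKnonneg (Ne.symm hK0)
    have hBfne : ∀ s ∈ I, Bf s ≠ 0 := by
      intro s hs h0
      have h := hgsq s hs
      rw [h0] at h
      simp at h
      exact hK0 h.symm
    set g : ℝ → ℝ := fun s => Bf s * Real.sqrt (τ s ^ 2 - κ s ^ 2) / κ s with hgdef
    have hg_sq : ∀ s ∈ I, g s ^ 2 = K := by
      intro s hs
      have h : g s ^ 2 = Bf s * Bf s * (τ s ^ 2 - κ s ^ 2) / (κ s) ^ 2 := by
        rw [hgdef]
        rw [div_pow, mul_pow, Real.sq_sqrt (hpos s hs).le]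
        ring
      rw [h]; exact hgsq s hs
    set m : ℝ := Real.sqrt K with hmdef
    have hmpos : 0 < m := Real.sqrt_pos.mpr hKpos
    have hm2 : m ^ 2 = K := Real.sq_sqrt hKpos.le
    have hgpm : ∀ s ∈ I, g s = m ∨ g s = -m := by
      intro s hs
      have h : (g s - m) * (g s + m) = 0 := by
        linear_combination (hg_sq s hs) - hm2
      rcases mul_eq_zero.mp h with h' | h'
      · left; linarith
      · right; linarith
    have hgne : ∀ s ∈ I, g s ≠ 0 := by
      intro s hs h0
      rcases hgpm s hs with h | h <;> rw [h0] at h <;> linarith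
    have hBfcont : ContinuousOn Bf I := fun s hs => ((hBf' s hs).continuousAt).continuousWithinAt
    have hgcont : ContinuousOn g I := by
      apply ContinuousOn.div
      · exact hBfcont.mul (Real.continuous_sqrt.comp_continuousOn
          ((hτs.continuousOn.pow 2).sub (hκs.continuousOn.pow 2)))
      · exact hκs.continuousOn
      · exact hκ0
    have hpre : IsPreconnected I := hIconn.convex.isPreconnected
    have hsign : (∀ s ∈ I, g s = m) ∨ (∀ s ∈ I, g s = -m) := by
      rcases hgpm s₀ hs₀ with h0 | h0
      · left; intro s hs
        rcases hgpm s hs with h | h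
        · exact h
        · exfalso
          have hsub := hpre.intermediate_value hs hs₀ hgcont
          have h0mem : (0:ℝ) ∈ Set.Icc (g s) (g s₀) := by
            rw [h, h0]; constructor <;> linarith
          obtain ⟨t, ht, hgt⟩ := hsub h0mem
          exact hgne t ht hgt
      · right; intro s hs
        rcases hgpm s hs with h | h
        · exfalso
          have hsub := hpre.intermediate_value hs₀ hs hgcont
          have h0mem : (0:ℝ) ∈ Set.Icc (g s₀) (g s) := by
            rw [h, h0]; constructor <;> linarith
          obtain ⟨t, ht, hgt⟩ := hsub h0mem
          exact hgne t ht hgt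
        · exact h
    have key : ∀ s ∈ I, κ s ^ 2 / (τ s ^ 2 - κ s ^ 2) ^ ((3 : ℝ) / 2) *
        deriv (fun u => τ u / κ u) s = c / g s := by
      intro s hs
      have hP : (0:ℝ) < τ s ^ 2 - κ s ^ 2 := hpos s hs
      have hk := hκ0 s hs
      have hb := hBfne s hs
      have hd : HasDerivAt (fun u => τ u / κ u)
          (-((κ s * c * Bf s - A s * -(τ s * c)) / (Bf s) ^ 2)) s := by
        have h1 : HasDerivAt (fun u => -(A u / Bf u))
            (-((κ s * c * Bf s - A s * -(τ s * c)) / (Bf s) ^ 2)) s :=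
          ((hA' s hs).div (hBf' s hs) hb).neg
        refine h1.congr_of_eventuallyEq ?_
        refine Filter.eventuallyEq_of_mem (hIopen.mem_nhds hs) (fun t ht => ?_)
        have he := hE1 t ht
        have hkt := hκ0 t ht
        have hbt := hBfne t ht
        field_simp
        linear_combination he
      rw [hd.deriv]
      have h32 : (τ s ^ 2 - κ s ^ 2) ^ ((3:ℝ)/2)
          = (τ s ^ 2 - κ s ^ 2) * Real.sqrt (τ s ^ 2 - κ s ^ 2) := by
        rw [show (3:ℝ)/2 = 1 + 1/2 by norm_num, Real.rpow_add hP, Real.rpow_one,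
          ← Real.sqrt_eq_rpow]
      rw [h32, hgdef]
      have hsp : Real.sqrt (τ s ^ 2 - κ s ^ 2) ≠ 0 := (Real.sqrt_pos.mpr hP).ne'
      have he := hE1 s hs
      field_simp
      linear_combination (-(c * τ s)) * he
    rcases hsign with h | h
    · refine ⟨m, hmpos, Or.inl fun s hs => ?_⟩
      rw [key s hs, h s hs]
    · refine ⟨m, hmpos, Or.inr fun s hs => ?_⟩
      rw [key s hs, h s hs, div_neg]
end
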